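/- arXiv:2305.12302 — 2 statements merged into one kernel-verified Lean document; each statement's English description precedes it below -/
import Mathlib

section
/- Let 0 < α ≤ 1, 0 < δ₀ ≤ 1, let F be a finite subset of the unit ball of ℝ^n with uniform probability measure μ, satisfying μ(B(X, δ)) ≤ C·δ^α for all X ∈ F and δ ≥ δ₀, with C ≥ 1. Let 0 < ε < 1 and μ_t = (f_t)_*μ with f_t(r₁, w, r₂) = (r₁, w · L(t), r₂ q(t)). Then there exist an absolute constant A' and a subset B' of the annulus B = {t : 1 ≤ ‖t‖ ≤ 2} with |B \ B'| ≤ ε^{−A'} δ₀^{ε}, such that for every t ∈ B' there is F_t ⊆ F with μ(F \ F_t) ≤ ε^{−A'} δ₀^{ε} and, for every X ∈ F_t and every δ ≥ δ₀, μ_t(B_{ℝ³}(f_t(X), δ)) ≤ D·ε^{−A'} δ₀^{−3ε} δ^{α}, where D depends only on C, L, q. -/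
open MeasureTheory Metric
open scoped ENNReal Classical

noncomputable section

/-- `ℝ^m` with the Euclidean norm. -/
abbrev E (m : ℕ) := EuclideanSpace ℝ (Fin m)

/-- `ℝ^n` written in coordinates `(r₁, w, r₂)` with `r₁, r₂ ∈ ℝ`, `w ∈ ℝ^{n-2}`,
equipped with the Euclidean (ℓ²) norm. -/
abbrev V (m : ℕ) := WithLp 2 (ℝ × WithLp 2 (E m × ℝ))

/-- The coordinate `r₁`. -/
def r1 {m : ℕ} (X : V m) : ℝ := (WithLp.equiv 2 _ X).1

/-- The coordinate `w ∈ ℝ^{n-2}`. -/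
def wc {m : ℕ} (X : V m) : E m := (WithLp.equiv 2 _ (WithLp.equiv 2 _ X).2).1

/-- The coordinate `r₂`. -/
def r2 {m : ℕ} (X : V m) : ℝ := (WithLp.equiv 2 _ (WithLp.equiv 2 _ X).2).2

/-- The map `f_t(r₁, w, r₂) = (r₁, w · L(t), r₂ q(t)) ∈ ℝ³`. -/
def fproj {m : ℕ} (L : E m ≃ₗ[ℝ] E m) (q : QuadraticForm ℝ (E m)) (t : E m) (X : V m) :
    EuclideanSpace ℝ (Fin 3) :=
  (WithLp.equiv 2 _).symm ![r1 X, (inner ℝ (wc X) (L t) : ℝ), r2 X * q t]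

instance {m : ℕ} : MeasurableSpace (V m) := borel _
instance {m : ℕ} : BorelSpace (V m) := ⟨rfl⟩

/-- The uniform probability measure on a finite set `F`. -/
def unifOn {d : Type*} [MeasurableSpace d] (F : Finset d) : Measure d :=
  (F.card : ℝ≥0∞)⁻¹ • ∑ x ∈ F, Measure.dirac x

/-- The annulus `B = {t ∈ ℝ^{n-2} : 1 ≤ ‖t‖ ≤ 2}`. -/
def annulus (m : ℕ) : Set (E m) := {t | 1 ≤ ‖t‖ ∧ ‖t‖ ≤ 2}

variable {m : ℕ}

lemma norm_V_sq (Z : V m) : ‖Z‖^2 = (r1 Z)^2 + ‖wc Z‖^2 + (r2 Z)^2 := by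
  rw [WithLp.prod_norm_sq_eq_of_L2]
  have : ‖Z.snd‖^2 = ‖wc Z‖^2 + (r2 Z)^2 := by
    rw [WithLp.prod_norm_sq_eq_of_L2]
    simp [wc, r2, Real.norm_eq_abs, sq_abs]
  rw [this]
  simp [r1, Real.norm_eq_abs, sq_abs]
  ring

lemma r1_sub (X Y : V m) : r1 (X - Y) = r1 X - r1 Y := rfl
lemma wc_sub (X Y : V m) : wc (X - Y) = wc X - wc Y := rfl
lemma r2_sub (X Y : V m) : r2 (X - Y) = r2 X - r2 Y := rfl

lemma fproj_coord (L : E m ≃ₗ[ℝ] E m) (q : QuadraticForm ℝ (E m)) (t : E m) (X : V m) (i : Fin 3):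
    (fproj L q t X) i = ![r1 X, (inner ℝ (wc X) (L t) : ℝ), r2 X * q t] i := rfl

-- components of difference of fproj bounded by dist
lemma abs_le_dist_fproj (L : E m ≃ₗ[ℝ] E m) (q : QuadraticForm ℝ (E m)) (t : E m) (X Y : V m)
    (i : Fin 3) :
    |fproj L q t X i - fproj L q t Y i| ≤ dist (fproj L q t X) (fproj L q t Y) := by
  rw [dist_eq_norm]
  have h : (fproj L q t X - fproj L q t Y) i = fproj L q t X i - fproj L q t Y i := rfl
  rw [← h]
  rw [EuclideanSpace.norm_eq, show |(fproj L q t X - fproj L q t Y) i|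
      = Real.sqrt (‖(fproj L q t X - fproj L q t Y) i‖^2) by
    rw [Real.norm_eq_abs, sq_abs, Real.sqrt_sq_eq_abs]]
  exact Real.sqrt_le_sqrt (Finset.single_le_sum (f := fun j => ‖(fproj L q t X - fproj L q t Y) j‖ ^ 2)
    (fun j _ => sq_nonneg _) (Finset.mem_univ i))

lemma continuous_r1 : Continuous (r1 (m := m)) :=
  continuous_fst.comp (WithLp.prod_continuous_ofLp _ _ _)
lemma continuous_wc : Continuous (wc (m := m)) :=
  continuous_fst.comp ((WithLp.prod_continuous_ofLp _ _ _).comp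
    (continuous_snd.comp (WithLp.prod_continuous_ofLp _ _ _)))
lemma continuous_r2 : Continuous (r2 (m := m)) :=
  continuous_snd.comp ((WithLp.prod_continuous_ofLp _ _ _).comp
    (continuous_snd.comp (WithLp.prod_continuous_ofLp _ _ _)))

lemma continuous_q (q : QuadraticForm ℝ (E m)) : Continuous fun t => q t := by
  have : (fun t => q t) = fun t => (QuadraticMap.associatedHom ℝ q) t t := by
    ext t; rw [QuadraticMap.associated_eq_self_apply]
  rw [this]
  set B := QuadraticMap.associatedHom ℝ q
  have h1 : Continuous fun t : E m => (LinearMap.toContinuousLinearMap (B t) : E m →L[ℝ] ℝ) :=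
    (LinearMap.toContinuousLinearMap.comp B).continuous_of_finiteDimensional
  exact isBoundedBilinearMap_apply.continuous.comp (h1.prodMk continuous_id)

lemma continuous_fproj_X (L : E m ≃ₗ[ℝ] E m) (q : QuadraticForm ℝ (E m)) (t : E m) :
    Continuous (fproj L q t) := by
  apply (PiLp.continuous_toLp (p := 2) (β := fun _ : Fin 3 => ℝ)).comp
  apply continuous_pi
  intro i
  fin_cases i
  · exact continuous_r1
  · exact continuous_inner.comp (continuous_wc.prodMk (continuous_const (y := L t)))
  · exact continuous_r2.mul continuous_const

lemma continuous_fproj_t (L : E m ≃ₗ[ℝ] E m) (q : QuadraticForm ℝ (E m)) (X : V m) :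
    Continuous (fun t => fproj L q t X) := by
  apply (PiLp.continuous_toLp (p := 2) (β := fun _ : Fin 3 => ℝ)).comp
  apply continuous_pi
  intro i
  fin_cases i
  · exact continuous_const
  · exact (innerSL ℝ (wc X)).continuous.comp (L : E m →ₗ[ℝ] E m).continuous_of_finiteDimensional
  · exact continuous_const.mul (continuous_q q)

lemma exists_qmin (hm : 1 ≤ m) (q : QuadraticForm ℝ (E m)) (hq : q.PosDef)
    (hcont : Continuous fun t : E m => q t) :
    ∃ c > 0, ∀ t : E m, 1 ≤ ‖t‖ → c ≤ q t := by
  have hsne : (sphere (0 : E m) 1).Nonempty := by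
    refine ⟨EuclideanSpace.single ⟨0, hm⟩ 1, ?_⟩
    simp [EuclideanSpace.norm_single]
  obtain ⟨x₀, hx₀s, hmin⟩ := (isCompact_sphere (0 : E m) 1).exists_isMinOn hsne
    (hcont.continuousOn)
  have hx₀ : ‖x₀‖ = 1 := by simpa using hx₀s
  have hx₀ne : x₀ ≠ 0 := by intro h; rw [h] at hx₀; simp at hx₀
  refine ⟨q x₀, hq x₀ hx₀ne, fun t ht => ?_⟩
  have htne : t ≠ 0 := by intro h; rw [h] at ht; simp at ht; linarith
  have hnt : ‖t‖ ≠ 0 := by positivity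
  set u : E m := ‖t‖⁻¹ • t with hu
  have hun : ‖u‖ = 1 := by
    rw [hu, norm_smul]; simp [abs_of_nonneg (norm_nonneg t)]
    field_simp
  have hmem : u ∈ sphere (0 : E m) 1 := by simp [hun]
  have h1 : q x₀ ≤ q u := hmin hmem
  have h2 : q t = (‖t‖ * ‖t‖) • q u := by
    rw [hu, ← QuadraticMap.map_smul]
    congr 1
    rw [smul_smul]
    field_simp
    rw [one_smul]
  rw [h2]
  have : (1:ℝ) ≤ ‖t‖ * ‖t‖ := by nlinarith
  have hqu : 0 < q u := hq u (by intro h; rw [h] at hun; simp at hun)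
  calc q x₀ ≤ q u := h1
    _ = 1 * q u := by ring
    _ ≤ (‖t‖ * ‖t‖) • q u := by rw [smul_eq_mul]; nlinarith

lemma exists_adj_lb (L : E m ≃ₗ[ℝ] E m) :
    ∃ c > 0, ∀ w : E m,
      c * ‖w‖ ≤ ‖LinearMap.adjoint (L : E m →ₗ[ℝ] E m) w‖ := by
  set M := LinearMap.adjoint (L : E m →ₗ[ℝ] E m) with hM
  have hinj : Function.Injective M := by
    rw [← LinearMap.ker_eq_bot]
    rw [LinearMap.ker_eq_bot']
    intro x hx
    have : (inner ℝ (M x) (L.symm x) : ℝ) = 0 := by rw [hx]; simp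
    rw [hM, LinearMap.adjoint_inner_left] at this
    simp only [LinearEquiv.coe_coe, LinearEquiv.apply_symm_apply] at this
    exact inner_self_eq_zero.mp this
  have hsurj : Function.Surjective M := (LinearMap.injective_iff_surjective).mp hinj
  set Meq := LinearEquiv.ofBijective M ⟨hinj, hsurj⟩ with hMeq
  set f := LinearMap.toContinuousLinearMap (Meq.symm : E m →ₗ[ℝ] E m) with hf
  refine ⟨(‖f‖ + 1)⁻¹, by positivity, fun w => ?_⟩
  have h1 : ‖w‖ ≤ (‖f‖ + 1) * ‖M w‖ := by
    have : w = Meq.symm (Meq w) := by simp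
    calc ‖w‖ = ‖f (M w)‖ := by
          rw [hf]; simp only [LinearMap.coe_toContinuousLinearMap']
          rw [show (Meq.symm : E m →ₗ[ℝ] E m) (M w) = Meq.symm (Meq w) from rfl]
          simp
      _ ≤ ‖f‖ * ‖M w‖ := f.le_opNorm _
      _ ≤ (‖f‖ + 1) * ‖M w‖ := by nlinarith [norm_nonneg (M w), norm_nonneg f]
  rw [inv_mul_le_iff₀ (by positivity)]
  linarith

set_option maxHeartbeats 2000000 in
lemma slab_vol (u : E m) (hu : u ≠ 0) (δ : ℝ) (hδ : 0 < δ) :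
    volume {t : E m | ‖t‖ ≤ 2 ∧ |(inner ℝ u t : ℝ)| ≤ δ}
      ≤ ENNReal.ofReal ((4 * (volume (closedBall (0:E m) 5)).toReal + 1) * (δ / ‖u‖)) := by
  set c5 := (volume (closedBall (0:E m) 5)).toReal with hc5
  have hc5top : volume (closedBall (0:E m) 5) ≠ ⊤ := measure_closedBall_lt_top.ne
  have hc5eq : volume (closedBall (0:E m) 5) = ENNReal.ofReal c5 := by
    rw [hc5, ENNReal.ofReal_toReal hc5top]
  have hc5nn : 0 ≤ c5 := ENNReal.toReal_nonneg
  clear_value c5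
  have hun : 0 < ‖u‖ := norm_pos_iff.mpr hu
  set ρ := δ / ‖u‖ with hρ
  have hρpos : 0 < ρ := by positivity
  set v := ‖u‖⁻¹ • u with hv
  have hvn : ‖v‖ = 1 := by
    rw [hv, norm_smul]; simp [abs_of_nonneg hun.le]; field_simp
  have hvv : (inner ℝ v v : ℝ) = 1 := by
    rw [real_inner_self_eq_norm_sq, hvn]; norm_num
  have hinner : ∀ t : E m, (inner ℝ u t : ℝ) = ‖u‖ * (inner ℝ v t : ℝ) := by
    intro t
    rw [hv, real_inner_smul_left]
    field_simp
  clear_value v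
  -- target contained in A
  set A := {t : E m | ‖t‖ ≤ 2 ∧ (inner ℝ v t : ℝ) ∈ Set.Ico (-ρ) (2*ρ)} with hA
  have hmeasA : MeasurableSet A := by
    apply MeasurableSet.inter
    · exact measurableSet_le (continuous_norm.measurable) measurable_const
    · exact (measurableSet_Ico).preimage (Continuous.measurable (by
        exact continuous_inner.comp (continuous_const.prodMk continuous_id)))
  have hsub : {t : E m | ‖t‖ ≤ 2 ∧ |(inner ℝ u t : ℝ)| ≤ δ} ⊆ A := by
    rintro t ⟨ht2, htδ⟩
    rw [hinner, abs_mul, abs_of_nonneg hun.le] at htδ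
    have : |(inner ℝ v t : ℝ)| ≤ ρ := by
      rw [hρ, le_div_iff₀ hun]; rw [mul_comm]; linarith
    rcases abs_le.mp this with ⟨h1, h2⟩
    exact ⟨ht2, h1, lt_of_le_of_lt h2 (by linarith)⟩
  clear_value ρ
  by_cases hcase : (1:ℝ)/4 ≤ ρ
  · calc volume {t : E m | ‖t‖ ≤ 2 ∧ |(inner ℝ u t : ℝ)| ≤ δ}
        ≤ volume (closedBall (0:E m) 5) := by
          apply measure_mono; rintro t ⟨ht2, _⟩
          rw [mem_closedBall_zero_iff]; linarith
      _ = ENNReal.ofReal c5 := hc5eq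
      _ ≤ _ := by
          apply ENNReal.ofReal_le_ofReal; nlinarith
  · push_neg at hcase
    set N := ⌊1/(2*ρ)⌋₊ with hN
    have hN2 : (2:ℝ) ≤ 1/(2*ρ) := by
      rw [le_div_iff₀ (by positivity)]; linarith
    have hNge : (N:ℝ) ≥ 1/(4*ρ) := by
      have h1 : (N:ℝ) > 1/(2*ρ) - 1 := by
        have := Nat.lt_floor_add_one (1/(2*ρ)); rw [← hN] at this; linarith
      have h2 : 1/(4*ρ) = (1/(2*ρ))/2 := by
        field_simp; ring
      linarith
    have hNle : (N:ℝ) ≤ 1/(2*ρ) := Nat.floor_le (by positivity)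
    have hN1 : 1 ≤ N := by
      have h4 : (1:ℝ) < 1/(4*ρ) := by
        rw [lt_div_iff₀ (by positivity)]; linarith
      have : (1:ℝ) ≤ (N:ℝ) := by linarith
      exact_mod_cast this
    clear_value N
    -- translates
    set T : ℕ → Set (E m) := fun k => (· + (3*ρ*k) • v) '' A with hT
    have hvolT : ∀ k, volume (T k) = volume A := by
      intro k
      rw [hT]
      simp only [Set.image_add_right]
      exact measure_preimage_add_right volume _ A
    have hTmeas : ∀ k, MeasurableSet (T k) := by
      intro k; rw [hT]; simp only [Set.image_add_right]
      exact hmeasA.preimage (measurable_add_const _)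
    have hTsub : ∀ k < N, T k ⊆ closedBall (0:E m) 5 := by
      intro k hk
      rintro x ⟨t, ht, rfl⟩
      rw [mem_closedBall_zero_iff]
      have h1 : ‖t‖ ≤ 2 := ht.1
      have h2 : ‖(3*ρ*k) • v‖ = 3*ρ*k := by
        rw [norm_smul, hvn, mul_one, Real.norm_eq_abs, abs_of_nonneg (by positivity)]
      calc ‖t + (3*ρ*k) • v‖ ≤ ‖t‖ + ‖(3*ρ*k) • v‖ := norm_add_le _ _
        _ ≤ 2 + 3*ρ*N := by
            rw [h2]
            have : (k:ℝ) ≤ N := by exact_mod_cast hk.le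
            nlinarith
        _ ≤ 5 := by
            have : 3*ρ*(N:ℝ) ≤ 3*ρ*(1/(2*ρ)) := by nlinarith
            have h3 : 3*ρ*(1/(2*ρ)) = 3/2 := by field_simp
            linarith [h3 ▸ this]
    have hinT : ∀ k, ∀ x ∈ T k, (inner ℝ v x : ℝ) ∈ Set.Ico (-ρ + 3*ρ*k) (2*ρ + 3*ρ*k) := by
      intro k x hx
      obtain ⟨t, ht, rfl⟩ := hx
      rw [inner_add_right, real_inner_smul_right, hvv, mul_one]
      obtain ⟨h1, h2⟩ := ht.2
      constructor <;> [linarith; linarith]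
    have hdisj : (↑(Finset.range N) : Set ℕ).PairwiseDisjoint T := by
      intro k hk l hl hkl
      rw [Function.onFun, Set.disjoint_left]
      intro x hxk hxl
      have h1 := hinT k x hxk
      have h2 := hinT l x hxl
      obtain ⟨a1, a2⟩ := h1
      obtain ⟨b1, b2⟩ := h2
      have hρ3 : (0:ℝ) < 3*ρ := by positivity
      have hlk : (l:ℝ) < (k:ℝ) + 1 := by
        have h7 : 3*ρ*(l:ℝ) < 3*ρ*((k:ℝ)+1) := by linarith
        exact (mul_lt_mul_iff_right₀ hρ3).mp h7
      have hkl2 : (k:ℝ) < (l:ℝ) + 1 := by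
        have h7 : 3*ρ*(k:ℝ) < 3*ρ*((l:ℝ)+1) := by linarith
        exact (mul_lt_mul_iff_right₀ hρ3).mp h7
      have h5 : l < k + 1 := by exact_mod_cast hlk
      have h6 : k < l + 1 := by exact_mod_cast hkl2
      exact hkl (by omega)
    have hsum : (N : ℝ≥0∞) * volume A ≤ volume (closedBall (0:E m) 5) := by
      calc (N : ℝ≥0∞) * volume A = ∑ k ∈ Finset.range N, volume (T k) := by
            simp [hvolT, Finset.sum_const, mul_comm]
        _ = volume (⋃ k ∈ Finset.range N, T k) := by
            rw [measure_biUnion_finset hdisj (fun k _ => hTmeas k)]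
        _ ≤ volume (closedBall (0:E m) 5) := by
            apply measure_mono
            intro x hx
            simp only [Set.mem_iUnion] at hx
            obtain ⟨k, hk, hxk⟩ := hx
            exact hTsub k (Finset.mem_range.mp hk) hxk
    have hvolA : volume A ≤ ENNReal.ofReal (4 * c5 * ρ) := by
      have hNne : (N : ℝ≥0∞) ≠ 0 := by exact_mod_cast Nat.one_le_iff_ne_zero.mp hN1
      have hNnetop : (N : ℝ≥0∞) ≠ ⊤ := ENNReal.natCast_ne_top N
      have h1 : volume A ≤ volume (closedBall (0:E m) 5) / N := by
        rw [ENNReal.le_div_iff_mul_le (Or.inl hNne) (Or.inl hNnetop), mul_comm]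
        exact hsum
      calc volume A ≤ volume (closedBall (0:E m) 5) / N := h1
        _ = ENNReal.ofReal c5 / ENNReal.ofReal N := by
            rw [hc5eq, ENNReal.ofReal_natCast]
        _ = ENNReal.ofReal (c5 / N) := by
            rw [ENNReal.ofReal_div_of_pos (by exact_mod_cast hN1)]
        _ ≤ ENNReal.ofReal (4 * c5 * ρ) := by
            apply ENNReal.ofReal_le_ofReal
            rw [div_le_iff₀ (by exact_mod_cast hN1 : (0:ℝ) < N)]
            calc c5 = c5 * 1 := by ring
              _ ≤ c5 * (4 * ρ * N) := by
                  apply mul_le_mul_of_nonneg_left _ hc5nn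
                  calc (1:ℝ) = 4 * ρ * (1/(4*ρ)) := by field_simp
                    _ ≤ 4 * ρ * N := by nlinarith
              _ = 4 * c5 * ρ * N := by ring
    have hfin : (4 * c5 * ρ : ℝ) ≤ (4 * c5 + 1) * ρ := by nlinarith
    calc volume {t : E m | ‖t‖ ≤ 2 ∧ |(inner ℝ u t : ℝ)| ≤ δ} ≤ volume A := measure_mono hsub
      _ ≤ ENNReal.ofReal (4 * c5 * ρ) := hvolA
      _ ≤ ENNReal.ofReal ((4 * c5 + 1) * ρ) := ENNReal.ofReal_le_ofReal hfin


lemma unifOn_apply {d : Type*} [MeasurableSpace d] (F : Finset d) (s : Set d)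
    (hs : MeasurableSet s) :
    unifOn F s = (F.card : ℝ≥0∞)⁻¹ * ∑ x ∈ F, s.indicator 1 x := by
  rw [unifOn, Measure.smul_apply, Measure.finset_sum_apply]
  simp only [smul_eq_mul]
  congr 1
  exact Finset.sum_congr rfl fun x _ => Measure.dirac_apply' x hs

lemma measurableSet_annulus (m : ℕ) : MeasurableSet (annulus m) := by
  have : annulus m = (closedBall (0: E m) 2) ∩ (ball (0:E m) 1)ᶜ := by
    ext t
    simp [annulus, mem_closedBall_zero_iff, mem_ball_zero_iff, not_lt, and_comm]
  rw [this]
  exact measurableSet_closedBall.inter measurableSet_ball.compl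

lemma annulus_subset_ball (m : ℕ) : annulus m ⊆ closedBall (0 : E m) 5 := by
  intro t ht
  rw [mem_closedBall_zero_iff]
  exact ht.2.trans (by norm_num)

set_option maxHeartbeats 1000000 in
lemma pair_vol (m : ℕ) (hm : 1 ≤ m) (L : E m ≃ₗ[ℝ] E m) (q : QuadraticForm ℝ (E m))
    (hq : q.PosDef) :
    ∃ K : ℝ, 1 ≤ K ∧ ∀ X Y : V m, X ≠ Y → ∀ δ : ℝ, 0 < δ →
      volume ({t | dist (fproj L q t X) (fproj L q t Y) ≤ δ} ∩ annulus m)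
        ≤ ENNReal.ofReal (K * (δ / dist X Y)) := by
  obtain ⟨c₁, hc₁, hqlb⟩ := exists_qmin hm q hq (continuous_q q)
  obtain ⟨c₂, hc₂, hadj⟩ := exists_adj_lb L
  set c5 := (volume (closedBall (0:E m) 5)).toReal with hc5
  have hc5top : volume (closedBall (0:E m) 5) ≠ ⊤ := measure_closedBall_lt_top.ne
  have hc5eq : volume (closedBall (0:E m) 5) = ENNReal.ofReal c5 := by
    rw [hc5, ENNReal.ofReal_toReal hc5top]
  have hc5nn : 0 ≤ c5 := ENNReal.toReal_nonneg
  clear_value c5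
  set c3 := 4*c5+1 with hc3
  have hc3pos : 0 < c3 := by positivity
  have h1t : (0:ℝ) ≤ 2*c5/c₁ := by positivity
  have h2t : (0:ℝ) ≤ 2*c3/c₂ := by positivity
  refine ⟨1 + 2*c5 + 2*c5/c₁ + 2*c3/c₂, by linarith, fun X Y hXY δ hδ => ?_⟩
  set K := 1 + 2*c5 + 2*c5/c₁ + 2*c3/c₂ with hK
  have hK1 : (1:ℝ) ≤ K := by rw [hK]; linarith
  set d := dist X Y with hd'
  have hd : 0 < d := dist_pos.mpr hXY
  set a := r1 X - r1 Y with ha'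
  set b := r2 X - r2 Y with hb'
  set wΔ := wc X - wc Y with hw'
  have hdecomp : d^2 = a^2 + ‖wΔ‖^2 + b^2 := by
    rw [hd', dist_eq_norm, norm_V_sq (X - Y), r1_sub, wc_sub, r2_sub]
  -- component bounds for points of the set
  have hcomp : ∀ t ∈ ({t | dist (fproj L q t X) (fproj L q t Y) ≤ δ} ∩ annulus m),
      |a| ≤ δ ∧ |(inner ℝ wΔ (L t) : ℝ)| ≤ δ ∧ |b| * q t ≤ δ ∧ 1 ≤ ‖t‖ ∧ ‖t‖ ≤ 2 := by
    rintro t ⟨ht1, ht2⟩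
    have h0 := abs_le_dist_fproj L q t X Y 0
    have h1 := abs_le_dist_fproj L q t X Y 1
    have h2 := abs_le_dist_fproj L q t X Y 2
    simp only [fproj_coord, Matrix.cons_val_zero, Matrix.cons_val_one, Matrix.head_cons,
      Matrix.cons_val_two, Matrix.tail_cons] at h0 h1 h2
    have ht1' : dist (fproj L q t X) (fproj L q t Y) ≤ δ := ht1
    refine ⟨ha' ▸ (h0.trans ht1'), ?_, ?_, ht2.1, ht2.2⟩
    · have : (inner ℝ (wc X) (L t) : ℝ) - inner ℝ (wc Y) (L t) = inner ℝ wΔ (L t) := by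
        rw [hw', inner_sub_left]
      rw [← this]
      exact h1.trans ht1'
    · have heq : r2 X * q t - r2 Y * q t = b * q t := by rw [hb']; ring
      rw [heq] at h2
      have hqnn : 0 ≤ q t := hq.nonneg t
      calc |b| * q t = |b * q t| := by rw [abs_mul, abs_of_nonneg hqnn]
        _ ≤ δ := h2.trans ht1'
  have hqd : (0:ℝ) ≤ δ / d := by positivity
  clear_value K d a b wΔ
  have hmax : d/2 ≤ |a| ∨ d/2 ≤ ‖wΔ‖ ∨ d/2 ≤ |b| := by
    by_contra h
    push_neg at h
    obtain ⟨h1, h2, h3⟩ := h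
    have e1 : a^2 < (d/2)^2 := by
      rw [← sq_abs a]; exact pow_lt_pow_left₀ h1 (abs_nonneg a) (by norm_num)
    have e2 : ‖wΔ‖^2 < (d/2)^2 := pow_lt_pow_left₀ h2 (norm_nonneg wΔ) (by norm_num)
    have e3 : b^2 < (d/2)^2 := by
      rw [← sq_abs b]; exact pow_lt_pow_left₀ h3 (abs_nonneg b) (by norm_num)
    have e4 : (d/2)^2 = d^2/4 := by ring
    nlinarith [pow_pos hd 2]
  -- bound by c5 whenever we know δ/d is bounded below
  have htriv : ∀ r : ℝ, 0 < r → r ≤ δ/d → c5 * (1/r) ≤ K →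
      volume ({t | dist (fproj L q t X) (fproj L q t Y) ≤ δ} ∩ annulus m)
        ≤ ENNReal.ofReal (K * (δ / d)) := by
    intro r hr hrd hrK
    calc volume ({t | dist (fproj L q t X) (fproj L q t Y) ≤ δ} ∩ annulus m)
        ≤ volume (closedBall (0:E m) 5) :=
          measure_mono ((Set.inter_subset_right).trans (annulus_subset_ball m))
      _ = ENNReal.ofReal c5 := hc5eq
      _ ≤ ENNReal.ofReal (K * (δ / d)) := by
          apply ENNReal.ofReal_le_ofReal
          have step1 : c5 = (c5 * (1/r)) * r := by field_simp
          have step2 : (c5 * (1/r)) * r ≤ K * r :=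
            mul_le_mul_of_nonneg_right hrK hr.le
          have step3 : K * r ≤ K * (δ/d) :=
            mul_le_mul_of_nonneg_left hrd (by linarith)
          linarith
  rcases hmax with hca | hcw | hcb
  · -- r1 component dominates
    rcases Set.eq_empty_or_nonempty
        ({t | dist (fproj L q t X) (fproj L q t Y) ≤ δ} ∩ annulus m) with he | ⟨t₀, ht₀⟩
    · rw [he]; simp
    · obtain ⟨hA, _, _, _, _⟩ := hcomp t₀ ht₀
      have hrd : (1:ℝ)/2 ≤ δ/d := by
        rw [le_div_iff₀ hd]; linarith
      apply htriv (1/2) (by norm_num) hrd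
      have heq2 : c5 * (1/((1:ℝ)/2)) = 2*c5 := by norm_num [mul_comm]
      rw [heq2, hK]; linarith
  · -- w component dominates
    have hwne : wΔ ≠ 0 := by
      intro h
      rw [h] at hcw
      simp at hcw
      nlinarith
    set u := LinearMap.adjoint (L : E m →ₗ[ℝ] E m) wΔ with hu'
    have hul : c₂ * ‖wΔ‖ ≤ ‖u‖ := hadj wΔ
    have hwpos : 0 < ‖wΔ‖ := norm_pos_iff.mpr hwne
    have hupos : 0 < ‖u‖ := lt_of_lt_of_le (by positivity) hul
    have hune : u ≠ 0 := norm_pos_iff.mp hupos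
    have hsub2 : ({t | dist (fproj L q t X) (fproj L q t Y) ≤ δ} ∩ annulus m)
        ⊆ {t : E m | ‖t‖ ≤ 2 ∧ |(inner ℝ u t : ℝ)| ≤ δ} := by
      intro t ht
      obtain ⟨_, hin, _, _, h2n⟩ := hcomp t ht
      refine ⟨h2n, ?_⟩
      have : (inner ℝ u t : ℝ) = inner ℝ wΔ (L t) := by
        rw [hu', LinearMap.adjoint_inner_left]
        rfl
      rw [this]
      exact hin
    calc volume ({t | dist (fproj L q t X) (fproj L q t Y) ≤ δ} ∩ annulus m)
        ≤ volume {t : E m | ‖t‖ ≤ 2 ∧ |(inner ℝ u t : ℝ)| ≤ δ} := measure_mono hsub2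
      _ ≤ ENNReal.ofReal ((4 * c5 + 1) * (δ / ‖u‖)) := by
          have := slab_vol u hune δ hδ
          rw [← hc5] at this
          exact this
      _ ≤ ENNReal.ofReal (K * (δ / d)) := by
          apply ENNReal.ofReal_le_ofReal
          have h1 : δ / ‖u‖ ≤ δ / (c₂ * (d/2)) := by
            apply div_le_div_of_nonneg_left hδ.le (by positivity)
            calc c₂ * (d/2) ≤ c₂ * ‖wΔ‖ := by
                  apply mul_le_mul_of_nonneg_left hcw hc₂.le
              _ ≤ ‖u‖ := hul
          have h2 : c3 * (δ / (c₂ * (d/2))) = (2*c3/c₂) * (δ/d) := by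
            field_simp
          calc (4 * c5 + 1) * (δ / ‖u‖) = c3 * (δ / ‖u‖) := by rw [hc3]
            _ ≤ c3 * (δ / (c₂ * (d/2))) := mul_le_mul_of_nonneg_left h1 hc3pos.le
            _ = (2*c3/c₂) * (δ/d) := h2
            _ ≤ K * (δ/d) := by
                apply mul_le_mul_of_nonneg_right _ hqd
                rw [hK]
                have : (0:ℝ) ≤ 1 + 2*c5 + 2*c5/c₁ := by positivity
                linarith
  · -- r2 component dominates
    rcases Set.eq_empty_or_nonempty
        ({t | dist (fproj L q t X) (fproj L q t Y) ≤ δ} ∩ annulus m) with he | ⟨t₀, ht₀⟩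
    · rw [he]; simp
    · obtain ⟨_, _, hB, h1n, _⟩ := hcomp t₀ ht₀
      have hq₀ : c₁ ≤ q t₀ := hqlb t₀ h1n
      have hrd : c₁/2 ≤ δ/d := by
        rw [le_div_iff₀ hd]
        have : |b| * c₁ ≤ |b| * q t₀ := mul_le_mul_of_nonneg_left hq₀ (abs_nonneg b)
        nlinarith
      apply htriv (c₁/2) (by positivity) hrd
      have heq : c5 * (1/(c₁/2)) = 2*c5/c₁ := by field_simp
      rw [heq, hK]
      have : (0:ℝ) ≤ 1 + 2*c5 + 2*c3/c₂ := by positivity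
      linarith

set_option maxHeartbeats 4000000 in
set_option synthInstance.maxHeartbeats 1000000 in
theorem stmt6 (n : ℕ) (hn : 3 ≤ n)
    (L : E (n - 2) ≃ₗ[ℝ] E (n - 2))
    (q : QuadraticForm ℝ (E (n - 2))) (hq : q.PosDef) :
    ∃ A' : ℝ, 0 < A' ∧
      ∀ C : ℝ, 1 ≤ C →
        ∃ D : ℝ, 0 < D ∧
          ∀ (α δ₀ ε : ℝ), 0 < α → α ≤ 1 → 0 < δ₀ → δ₀ ≤ 1 → 0 < ε → ε < 1 →
            ∀ F : Finset (V (n - 2)), F.Nonempty →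
              (↑F : Set (V (n - 2))) ⊆ Metric.closedBall 0 1 →
              (∀ X ∈ F, ∀ δ : ℝ, δ₀ ≤ δ →
                unifOn F (Metric.closedBall X δ) ≤ ENNReal.ofReal (C * δ ^ α)) →
              ∃ B' ⊆ annulus (n - 2),
                volume (annulus (n - 2) \ B') ≤ ENNReal.ofReal (ε ^ (-A') * δ₀ ^ ε) ∧
                ∀ t ∈ B', ∃ Ft ⊆ F,
                  unifOn F (↑(F \ Ft)) ≤ ENNReal.ofReal (ε ^ (-A') * δ₀ ^ ε) ∧
                  ∀ X ∈ Ft, ∀ δ : ℝ, δ₀ ≤ δ →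
                    ((unifOn F).map (fproj L q t)) (Metric.closedBall (fproj L q t X) δ)
                      ≤ ENNReal.ofReal (D * ε ^ (-A') * δ₀ ^ (-(3 * ε)) * δ ^ α) := by
  obtain ⟨K, hK1, hKvol⟩ := pair_vol (n-2) (by omega) L q hq
  set c5 := (volume (closedBall (0:E (n-2)) 5)).toReal with hc5
  have hc5top : volume (closedBall (0:E (n-2)) 5) ≠ ⊤ := measure_closedBall_lt_top.ne
  have hc5eq : volume (closedBall (0:E (n-2)) 5) = ENNReal.ofReal c5 := by
    rw [hc5, ENNReal.ofReal_toReal hc5top]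
  have hc5nn : 0 ≤ c5 := ENNReal.toReal_nonneg
  clear_value c5
  set K₂ := c5 + 2*K with hK₂
  have hK₂2 : 2 ≤ K₂ := by rw [hK₂]; linarith
  set K₃ := 1024*K₂ with hK₃
  have hK₃1 : 1 ≤ K₃ := by rw [hK₃]; linarith
  refine ⟨2, by norm_num, fun C hC => ?_⟩
  refine ⟨2*C*K₃, by nlinarith, fun α δ₀ ε hα hα1 hδ₀ hδ₀1 hε hε1 F hFne hFball hFrost => ?_⟩
  -- the dyadic scale count
  set J := ⌈Real.logb 2 (4/δ₀)⌉₊ with hJdef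
  have hJ4 : (4:ℝ) ≤ 2^(J:ℕ) * δ₀ := by
    have hx : (0:ℝ) < 4/δ₀ := by positivity
    have h1 : Real.logb 2 (4/δ₀) ≤ (J:ℝ) := Nat.le_ceil _
    have h2 : (4:ℝ)/δ₀ = 2 ^ Real.logb 2 (4/δ₀) :=
      (Real.rpow_logb (by norm_num) (by norm_num) hx).symm
    have h3 : (2:ℝ) ^ Real.logb 2 (4/δ₀) ≤ 2 ^ (J:ℝ) :=
      Real.rpow_le_rpow_of_exponent_le (by norm_num) h1
    have h4 : (2:ℝ) ^ (J:ℝ) = 2^(J:ℕ) := Real.rpow_natCast 2 J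
    rw [← div_le_iff₀ hδ₀]
    calc (4:ℝ)/δ₀ = 2 ^ Real.logb 2 (4/δ₀) := h2
      _ ≤ 2 ^ (J:ℝ) := h3
      _ = 2^(J:ℕ) := h4
  have hJub : (J:ℝ) + 1 ≤ 32 * ε⁻¹ * δ₀^(-(ε/4)) := by
    have hx1 : (1:ℝ) ≤ 4/δ₀ := by rw [le_div_iff₀ hδ₀]; linarith
    have hx4 : (4:ℝ) ≤ 4/δ₀ := by rw [le_div_iff₀ hδ₀]; nlinarith
    have hxpos : (0:ℝ) < 4/δ₀ := by positivity
    have hlognn : 0 ≤ Real.logb 2 (4/δ₀) := Real.logb_nonneg (by norm_num) hx1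
    have hceil : (J:ℝ) < Real.logb 2 (4/δ₀) + 1 := Nat.ceil_lt_add_one hlognn
    have hlog2 : (0.6931471803:ℝ) < Real.log 2 := Real.log_two_gt_d9
    have hlogx_nn : 0 ≤ Real.log (4/δ₀) := Real.log_nonneg hx1
    have hlogb : Real.logb 2 (4/δ₀) ≤ 2 * Real.log (4/δ₀) := by
      rw [Real.logb, div_le_iff₀ (by linarith)]
      nlinarith
    have hlogx1 : (1:ℝ) ≤ Real.log (4/δ₀) := by
      have hmono : Real.log 4 ≤ Real.log (4/δ₀) := Real.log_le_log (by norm_num) hx4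
      have h4 : Real.log 4 = 2 * Real.log 2 := by
        rw [show (4:ℝ) = 2^2 by norm_num, Real.log_pow]; push_cast; ring
      nlinarith
    have hkey : Real.log (4/δ₀) ≤ (4/ε) * (4/δ₀)^(ε/4) := by
      have h5 : Real.log ((4/δ₀)^(ε/4)) = (ε/4) * Real.log (4/δ₀) := Real.log_rpow hxpos _
      have h6 : Real.log ((4/δ₀)^(ε/4)) ≤ (4/δ₀)^(ε/4) := by
        have := Real.log_le_sub_one_of_pos (x := (4/δ₀)^(ε/4)) (by positivity)
        linarith
      have h7 : (ε/4) * Real.log (4/δ₀) ≤ (4/δ₀)^(ε/4) := by rw [← h5]; exact h6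
      have h8 := mul_le_mul_of_nonneg_left h7 (by positivity : (0:ℝ) ≤ 4/ε)
      have h9 : (4/ε)*((ε/4)*Real.log (4/δ₀)) = Real.log (4/δ₀) := by field_simp
      linarith
    have hsplit4 : ((4:ℝ)/δ₀)^(ε/4) = 4^(ε/4) * δ₀^(-(ε/4)) := by
      rw [Real.div_rpow (by norm_num) hδ₀.le, Real.rpow_neg hδ₀.le, div_eq_mul_inv]
    have h4e : (4:ℝ)^(ε/4) ≤ 2 := by
      have ha : (4:ℝ)^(ε/4) ≤ 4^((1:ℝ)/2) :=
        Real.rpow_le_rpow_of_exponent_le (by norm_num) (by linarith)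
      have h42 : (4:ℝ)^((1:ℝ)/2) = 2 := by
        rw [show (4:ℝ) = 2^(2:ℕ) by norm_num, ← Real.rpow_natCast 2 2,
          ← Real.rpow_mul (by norm_num)]
        norm_num
      linarith
    have hxp : (0:ℝ) < δ₀^(-(ε/4)) := by positivity
    have c1 : (J:ℝ)+1 ≤ 2*Real.log (4/δ₀) + 2 := by linarith
    have c1' : (J:ℝ)+1 ≤ 4*Real.log (4/δ₀) := by linarith
    have c2 : 4*Real.log (4/δ₀) ≤ (16/ε)*(4/δ₀)^(ε/4) := by
      have := mul_le_mul_of_nonneg_left hkey (by norm_num : (0:ℝ) ≤ 4)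
      have e : 4*((4/ε)*(4/δ₀)^(ε/4)) = (16/ε)*(4/δ₀)^(ε/4) := by ring
      linarith
    have c3 : (16/ε)*(4/δ₀)^(ε/4) ≤ 32*ε⁻¹*δ₀^(-(ε/4)) := by
      rw [hsplit4]
      have h16 : (0:ℝ) ≤ 16/ε := by positivity
      calc (16/ε)*(4^(ε/4)*δ₀^(-(ε/4))) ≤ (16/ε)*(2*δ₀^(-(ε/4))) := by
            apply mul_le_mul_of_nonneg_left _ h16
            exact mul_le_mul_of_nonneg_right h4e hxp.le
        _ = 32*ε⁻¹*δ₀^(-(ε/4)) := by field_simp; ring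
    linarith
  clear_value J
  have hδj : ∀ j : ℕ, δ₀ ≤ 2^j * δ₀ := by
    intro j
    nlinarith [one_le_pow₀ (by norm_num : (1:ℝ) ≤ 2) (n := j)]
  have hδjpos : ∀ j : ℕ, (0:ℝ) < 2^j * δ₀ := fun j => lt_of_lt_of_le hδ₀ (hδj j)
  -- basic measure facts
  set N := (F.card : ℝ≥0∞) with hN
  have hNne : N ≠ 0 := by
    rw [hN]
    exact_mod_cast Nat.cast_ne_zero.mpr (Finset.card_ne_zero.mpr hFne)
  have hNtop : N ≠ ⊤ := by rw [hN]; exact ENNReal.natCast_ne_top _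
  have hsumN : ∑ _X ∈ F, N⁻¹ = 1 := by
    rw [Finset.sum_const, hN, nsmul_eq_mul, ENNReal.mul_inv_cancel hNne hNtop]
  have hmap : ∀ (t : E (n-2)) (c : EuclideanSpace ℝ (Fin 3)) (δ : ℝ),
      (unifOn F).map (fproj L q t) (closedBall c δ)
        = N⁻¹ * ∑ Y ∈ F, if dist (fproj L q t Y) c ≤ δ then (1:ℝ≥0∞) else 0 := by
    intro t c δ
    have hsum : ∑ Y ∈ F, ((fproj L q t) ⁻¹' (closedBall c δ)).indicator (1 : V (n-2) → ℝ≥0∞) Y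
        = ∑ Y ∈ F, if dist (fproj L q t Y) c ≤ δ then (1:ℝ≥0∞) else 0 :=
      Finset.sum_congr rfl fun Y _ => by
        simp [Set.indicator_apply, Set.mem_preimage, mem_closedBall]
    rw [Measure.map_apply (continuous_fproj_X L q t).measurable measurableSet_closedBall,
      unifOn_apply _ _ ((continuous_fproj_X L q t).measurable measurableSet_closedBall), hN,
      hsum]
  have hmeasT : ∀ (X : V (n-2)) (r : ℝ),
      Measurable (fun t : E (n-2) => (unifOn F).map (fproj L q t)
        (closedBall (fproj L q t X) r)) := by
    intro X r
    have heq : (fun t : E (n-2) => (unifOn F).map (fproj L q t) (closedBall (fproj L q t X) r))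
        = fun t => N⁻¹ * ∑ Y ∈ F,
            if dist (fproj L q t Y) (fproj L q t X) ≤ r then (1:ℝ≥0∞) else 0 := by
      funext t; rw [hmap]
    rw [heq]
    apply Measurable.const_mul
    apply Finset.measurable_sum
    intro Y _
    have hclosed : MeasurableSet {t : E (n-2) | dist (fproj L q t Y) (fproj L q t X) ≤ r} :=
      (isClosed_le ((continuous_fproj_t L q Y).dist (continuous_fproj_t L q X))
        continuous_const).measurableSet
    exact Measurable.ite hclosed measurable_const measurable_const
  -- integral of a single-scale term
  have hint_term : ∀ X ∈ F, ∀ j : ℕ,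
      ∫⁻ t in annulus (n-2), (unifOn F).map (fproj L q t)
          (closedBall (fproj L q t X) (2^j * δ₀)) ∂volume
        ≤ ENNReal.ofReal (C * K₂ * ((J:ℝ)+1) * (2^j*δ₀)^α) := by
    intro X hXF j
    set δδ := (2:ℝ)^j * δ₀ with hδδdef
    have hδδpos : 0 < δδ := hδjpos j
    have hδδ0 : δ₀ ≤ δδ := hδj j
    have hmeasS : ∀ Y : V (n-2), MeasurableSet
        {s : E (n-2) | dist (fproj L q s Y) (fproj L q s X) ≤ δδ} := fun Y =>
      (isClosed_le ((continuous_fproj_t L q Y).dist (continuous_fproj_t L q X))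
        continuous_const).measurableSet
    have hstep1 : ∫⁻ t in annulus (n-2), (unifOn F).map (fproj L q t)
          (closedBall (fproj L q t X) δδ) ∂volume
        = ∑ Y ∈ F, N⁻¹ * volume ({s : E (n-2) | dist (fproj L q s Y) (fproj L q s X) ≤ δδ}
            ∩ annulus (n-2)) := by
      have heq : ∀ t : E (n-2), (unifOn F).map (fproj L q t) (closedBall (fproj L q t X) δδ)
          = ∑ Y ∈ F, N⁻¹ * Set.indicator
              {s : E (n-2) | dist (fproj L q s Y) (fproj L q s X) ≤ δδ} (fun _ => (1:ℝ≥0∞)) t := by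
        intro t
        rw [hmap, Finset.mul_sum]
        refine Finset.sum_congr rfl fun Y _ => ?_
        congr 1
      calc ∫⁻ t in annulus (n-2), (unifOn F).map (fproj L q t)
            (closedBall (fproj L q t X) δδ) ∂volume
          = ∫⁻ t in annulus (n-2), ∑ Y ∈ F, N⁻¹ * Set.indicator
              {s : E (n-2) | dist (fproj L q s Y) (fproj L q s X) ≤ δδ}
              (fun _ => (1:ℝ≥0∞)) t ∂volume := lintegral_congr heq
        _ = ∑ Y ∈ F, ∫⁻ t in annulus (n-2), N⁻¹ * Set.indicator
              {s : E (n-2) | dist (fproj L q s Y) (fproj L q s X) ≤ δδ}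
              (fun _ => (1:ℝ≥0∞)) t ∂volume :=
            lintegral_finset_sum _ (fun Y _ =>
              (measurable_const.indicator (hmeasS Y)).const_mul _)
        _ = ∑ Y ∈ F, N⁻¹ * volume ({s : E (n-2) | dist (fproj L q s Y) (fproj L q s X) ≤ δδ}
              ∩ annulus (n-2)) := by
            refine Finset.sum_congr rfl fun Y _ => ?_
            rw [lintegral_const_mul _ (measurable_const.indicator (hmeasS Y))]
            congr 1
            rw [lintegral_indicator_const (hmeasS Y), one_mul,
              Measure.restrict_apply (hmeasS Y)]
    have hYb : ∀ Y ∈ F, volume ({s : E (n-2) | dist (fproj L q s Y) (fproj L q s X) ≤ δδ}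
          ∩ annulus (n-2))
        ≤ (if dist Y X ≤ δδ then ENNReal.ofReal c5 else 0)
          + ∑ k ∈ Finset.range J,
              (if dist Y X ≤ 2^(k+1)*δδ then ENNReal.ofReal (K*((2:ℝ)^k)⁻¹) else 0) := by
      intro Y hYF
      by_cases hnear : dist Y X ≤ δδ
      · rw [if_pos hnear]
        have hb1 : volume ({s : E (n-2) | dist (fproj L q s Y) (fproj L q s X) ≤ δδ}
            ∩ annulus (n-2)) ≤ ENNReal.ofReal c5 := by
          refine le_trans (measure_mono
            (Set.inter_subset_right.trans (annulus_subset_ball (n-2)))) ?_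
          rw [← hc5eq]
        exact le_trans hb1 (self_le_add_right _ _)
      · push_neg at hnear
        have hYX : Y ≠ X := by
          intro h
          rw [h, dist_self] at hnear
          linarith
        have hd2 : dist Y X ≤ 2 := by
          have hY1 : Y ∈ closedBall (0: V (n-2)) 1 := hFball hYF
          have hX1 : X ∈ closedBall (0: V (n-2)) 1 := hFball hXF
          rw [mem_closedBall] at hY1 hX1
          calc dist Y X ≤ dist Y 0 + dist 0 X := dist_triangle _ _ _
            _ ≤ 1 + 1 := add_le_add hY1 (by rw [dist_comm]; exact hX1)
            _ = 2 := by norm_num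
        set P := fun k : ℕ => (2:ℝ)^k * δδ < dist Y X with hPdef
        have hP0 : P 0 := by simpa [hPdef] using hnear
        have hPJ : ¬ P J := by
          rw [hPdef]
          push_neg
          have hmono : (2:ℝ)^J * δ₀ ≤ 2^J * δδ :=
            mul_le_mul_of_nonneg_left hδδ0 (by positivity)
          linarith
        have hPk₀ : P (Nat.findGreatest P J) := Nat.findGreatest_spec (Nat.zero_le J) hP0
        have hk₀le : Nat.findGreatest P J ≤ J := Nat.findGreatest_le J
        have hk₀lt : Nat.findGreatest P J < J := lt_of_le_of_ne hk₀le (fun h => hPJ (h ▸ hPk₀))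
        set k₀ := Nat.findGreatest P J with hk₀def
        have hnotP : ¬ P (k₀+1) :=
          Nat.findGreatest_is_greatest (Nat.lt_succ_self k₀) (by omega)
        have hdub : dist Y X ≤ 2^(k₀+1)*δδ := by
          rw [hPdef] at hnotP
          exact not_lt.mp hnotP
        have hdpos : (0:ℝ) < dist Y X := dist_pos.mpr hYX
        have hvol := hKvol Y X hYX δδ hδδpos
        have hPk₀' : (2:ℝ)^k₀ * δδ < dist Y X := hPk₀
        have hratio : K * (δδ / dist Y X) ≤ K * ((2:ℝ)^k₀)⁻¹ := by
          apply mul_le_mul_of_nonneg_left _ (by linarith : (0:ℝ) ≤ K)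
          rw [div_le_iff₀ hdpos]
          calc δδ = ((2:ℝ)^k₀)⁻¹ * ((2:ℝ)^k₀ * δδ) := by
                field_simp
            _ ≤ ((2:ℝ)^k₀)⁻¹ * dist Y X :=
                mul_le_mul_of_nonneg_left hPk₀'.le (by positivity)
        have hk₀mem : k₀ ∈ Finset.range J := Finset.mem_range.mpr hk₀lt
        have hsum_ge : (if dist Y X ≤ 2^(k₀+1)*δδ then ENNReal.ofReal (K*((2:ℝ)^k₀)⁻¹) else 0)
            ≤ ∑ k ∈ Finset.range J,
                (if dist Y X ≤ 2^(k+1)*δδ then ENNReal.ofReal (K*((2:ℝ)^k)⁻¹) else 0) :=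
          Finset.single_le_sum (f := fun k =>
            (if dist Y X ≤ 2^(k+1)*δδ then ENNReal.ofReal (K*((2:ℝ)^k)⁻¹) else 0))
            (fun k _ => zero_le) hk₀mem
        calc volume ({s : E (n-2) | dist (fproj L q s Y) (fproj L q s X) ≤ δδ}
              ∩ annulus (n-2))
            ≤ ENNReal.ofReal (K * (δδ / dist Y X)) := hvol
          _ ≤ ENNReal.ofReal (K*((2:ℝ)^k₀)⁻¹) := ENNReal.ofReal_le_ofReal hratio
          _ = (if dist Y X ≤ 2^(k₀+1)*δδ then ENNReal.ofReal (K*((2:ℝ)^k₀)⁻¹) else 0) := by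
              rw [if_pos hdub]
          _ ≤ ∑ k ∈ Finset.range J,
                (if dist Y X ≤ 2^(k+1)*δδ then ENNReal.ofReal (K*((2:ℝ)^k)⁻¹) else 0) := hsum_ge
          _ ≤ (if dist Y X ≤ δδ then ENNReal.ofReal c5 else 0)
              + ∑ k ∈ Finset.range J,
                  (if dist Y X ≤ 2^(k+1)*δδ then ENNReal.ofReal (K*((2:ℝ)^k)⁻¹) else 0) :=
              le_add_self
    have hcount : ∀ (c : ℝ≥0∞) (r : ℝ), δ₀ ≤ r →
        ∑ Y ∈ F, N⁻¹ * (if dist Y X ≤ r then c else 0) ≤ c * ENNReal.ofReal (C * r^α) := by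
      intro c r hr
      have he : ∑ Y ∈ F, N⁻¹ * (if dist Y X ≤ r then c else 0)
          = c * ((F.card : ℝ≥0∞)⁻¹ * ∑ Y ∈ F,
              (closedBall X r).indicator (1 : V (n-2) → ℝ≥0∞) Y) := by
        rw [Finset.mul_sum, Finset.mul_sum]
        refine Finset.sum_congr rfl fun Y _ => ?_
        by_cases hmem : dist Y X ≤ r
        · rw [if_pos hmem, Set.indicator_of_mem (mem_closedBall.mpr hmem), hN]
          simp only [Pi.one_apply, mul_one]
          ring
        · rw [if_neg hmem, Set.indicator_of_notMem (fun hc => hmem (mem_closedBall.mp hc))]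
          simp
      rw [he, ← unifOn_apply F _ measurableSet_closedBall]
      exact mul_le_mul_right (hFrost X hXF r hr) c
    have hkterm : ∀ k : ℕ, K*((2:ℝ)^k)⁻¹*(C*((2:ℝ)^(k+1)*δδ)^α) ≤ 2*K*C*δδ^α := by
      intro k
      have hk1 : ((2:ℝ)^(k+1)*δδ)^α = ((2:ℝ)^(k+1))^α * δδ^α :=
        Real.mul_rpow (by positivity) hδδpos.le
      have hk2 : ((2:ℝ)^(k+1))^α ≤ (2:ℝ)^(k+1) := by
        have h1x : (1:ℝ) ≤ (2:ℝ)^(k+1) := one_le_pow₀ (by norm_num)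
        have := Real.rpow_le_rpow_of_exponent_le h1x hα1
        rwa [Real.rpow_one] at this
      have hx : ((2:ℝ)^k)⁻¹*((2:ℝ)^(k+1))^α ≤ ((2:ℝ)^k)⁻¹*(2:ℝ)^(k+1) :=
        mul_le_mul_of_nonneg_left hk2 (by positivity)
      have hxy : ((2:ℝ)^k)⁻¹*(2:ℝ)^(k+1) = 2 := by
        rw [pow_succ]
        field_simp
      have hKC : (0:ℝ) ≤ K*C := by nlinarith
      calc K*((2:ℝ)^k)⁻¹*(C*((2:ℝ)^(k+1)*δδ)^α)
          = K*C*(((2:ℝ)^k)⁻¹*((2:ℝ)^(k+1))^α)*δδ^α := by rw [hk1]; ring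
        _ ≤ K*C*(((2:ℝ)^k)⁻¹*(2:ℝ)^(k+1))*δδ^α :=
            mul_le_mul_of_nonneg_right (mul_le_mul_of_nonneg_left hx hKC) (by positivity)
        _ = 2*K*C*δδ^α := by rw [hxy]; ring
    have hfinreal : c5*(C*δδ^α) + (J:ℝ)*(2*K*C*δδ^α) ≤ C*K₂*((J:ℝ)+1)*δδ^α := by
      have hkey : (0:ℝ) ≤ C*δδ^α*(c5*(J:ℝ) + 2*K) :=
        mul_nonneg (mul_nonneg (by linarith) (by positivity))
          (by nlinarith [mul_nonneg hc5nn (Nat.cast_nonneg J : (0:ℝ) ≤ (J:ℝ))])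
      have hid : C*K₂*((J:ℝ)+1)*δδ^α
          = c5*(C*δδ^α) + (J:ℝ)*(2*K*C*δδ^α) + C*δδ^α*(c5*(J:ℝ) + 2*K) := by
        rw [hK₂]; ring
      linarith
    rw [hstep1]
    calc ∑ Y ∈ F, N⁻¹ * volume ({s : E (n-2) | dist (fproj L q s Y) (fproj L q s X) ≤ δδ}
            ∩ annulus (n-2))
        ≤ ∑ Y ∈ F, N⁻¹ * ((if dist Y X ≤ δδ then ENNReal.ofReal c5 else 0)
            + ∑ k ∈ Finset.range J,
                (if dist Y X ≤ 2^(k+1)*δδ then ENNReal.ofReal (K*((2:ℝ)^k)⁻¹) else 0)) :=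
          Finset.sum_le_sum (fun Y hY => mul_le_mul_right (hYb Y hY) _)
      _ = (∑ Y ∈ F, N⁻¹ * (if dist Y X ≤ δδ then ENNReal.ofReal c5 else 0))
          + ∑ k ∈ Finset.range J, ∑ Y ∈ F, N⁻¹ *
              (if dist Y X ≤ 2^(k+1)*δδ then ENNReal.ofReal (K*((2:ℝ)^k)⁻¹) else 0) := by
          calc ∑ Y ∈ F, N⁻¹ * ((if dist Y X ≤ δδ then ENNReal.ofReal c5 else 0)
                + ∑ k ∈ Finset.range J,
                    (if dist Y X ≤ 2^(k+1)*δδ then ENNReal.ofReal (K*((2:ℝ)^k)⁻¹) else 0))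
              = ∑ Y ∈ F, (N⁻¹ * (if dist Y X ≤ δδ then ENNReal.ofReal c5 else 0)
                + ∑ k ∈ Finset.range J, N⁻¹ *
                    (if dist Y X ≤ 2^(k+1)*δδ then ENNReal.ofReal (K*((2:ℝ)^k)⁻¹) else 0)) := by
                refine Finset.sum_congr rfl fun Y _ => ?_
                rw [mul_add, Finset.mul_sum]
            _ = (∑ Y ∈ F, N⁻¹ * (if dist Y X ≤ δδ then ENNReal.ofReal c5 else 0))
                + ∑ Y ∈ F, ∑ k ∈ Finset.range J, N⁻¹ *
                    (if dist Y X ≤ 2^(k+1)*δδ then ENNReal.ofReal (K*((2:ℝ)^k)⁻¹) else 0) :=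
                Finset.sum_add_distrib
            _ = _ := by rw [Finset.sum_comm]
      _ ≤ ENNReal.ofReal c5 * ENNReal.ofReal (C*δδ^α)
          + ∑ k ∈ Finset.range J, ENNReal.ofReal (K*((2:ℝ)^k)⁻¹)
              * ENNReal.ofReal (C*((2:ℝ)^(k+1)*δδ)^α) := by
          refine add_le_add (hcount _ _ hδδ0) (Finset.sum_le_sum fun k _ => ?_)
          refine hcount _ _ (le_trans hδδ0 ?_)
          nlinarith [one_le_pow₀ (by norm_num : (1:ℝ) ≤ 2) (n := k+1)]
      _ ≤ ENNReal.ofReal (c5*(C*δδ^α)) + ∑ _k ∈ Finset.range J, ENNReal.ofReal (2*K*C*δδ^α) := by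
          refine add_le_add ?_ (Finset.sum_le_sum fun k _ => ?_)
          · rw [← ENNReal.ofReal_mul hc5nn]
          · rw [← ENNReal.ofReal_mul (by positivity)]
            exact ENNReal.ofReal_le_ofReal (hkterm k)
      _ = ENNReal.ofReal (c5*(C*δδ^α)) + ENNReal.ofReal ((J:ℝ)*(2*K*C*δδ^α)) := by
          rw [Finset.sum_const, Finset.card_range, nsmul_eq_mul,
            ← ENNReal.ofReal_natCast J, ← ENNReal.ofReal_mul (Nat.cast_nonneg J)]
      _ = ENNReal.ofReal (c5*(C*δδ^α) + (J:ℝ)*(2*K*C*δδ^α)) := by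
          rw [← ENNReal.ofReal_add (by positivity) (by positivity)]
      _ ≤ ENNReal.ofReal (C * K₂ * ((J:ℝ)+1) * δδ^α) := ENNReal.ofReal_le_ofReal hfinreal
  -- the exceptional functional
  set g : E (n-2) → V (n-2) → ℝ≥0∞ := fun t X => ∑ j ∈ Finset.range (J+1),
      (ENNReal.ofReal ((2^j*δ₀)^α))⁻¹ * (unifOn F).map (fproj L q t)
        (closedBall (fproj L q t X) (2^j*δ₀)) with hg
  set G : E (n-2) → ℝ≥0∞ := fun t => ∑ X ∈ F, N⁻¹ * g t X with hG
  have hGmeas : Measurable G := by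
    rw [hG]
    apply Finset.measurable_sum
    intro X _
    apply Measurable.const_mul
    rw [hg]
    apply Finset.measurable_sum
    intro j _
    exact (hmeasT X _).const_mul _
  have hGint : ∫⁻ t in annulus (n-2), G t ∂volume
      ≤ ENNReal.ofReal (C * K₃ * (ε⁻¹)^2 * δ₀^(-(ε/2))) := by
    have hmeasg : ∀ X : V (n-2), Measurable (fun t => g t X) := by
      intro X
      simp only [hg]
      apply Finset.measurable_sum
      intro j _
      exact (hmeasT X _).const_mul _
    have h1 : ∫⁻ t in annulus (n-2), G t ∂volume
        = ∑ X ∈ F, N⁻¹ * ∫⁻ t in annulus (n-2), g t X ∂volume := by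
      simp only [hG]
      rw [lintegral_finset_sum F (fun X _ => ((hmeasg X).const_mul _))]
      exact Finset.sum_congr rfl fun X _ => lintegral_const_mul _ (hmeasg X)
    have hCK₂J : (0:ℝ) ≤ C*K₂*((J:ℝ)+1) := by
      have hJ0 : (0:ℝ) ≤ (J:ℝ)+1 := by positivity
      have hK₂0 : (0:ℝ) ≤ K₂ := by linarith
      exact mul_nonneg (mul_nonneg (by linarith) hK₂0) hJ0
    have h2 : ∀ X ∈ F, ∫⁻ t in annulus (n-2), g t X ∂volume
        ≤ ((J+1 : ℕ) : ℝ≥0∞) * ENNReal.ofReal (C*K₂*((J:ℝ)+1)) := by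
      intro X hXF
      have e : ∫⁻ t in annulus (n-2), g t X ∂volume
          = ∑ j ∈ Finset.range (J+1), (ENNReal.ofReal ((2^j*δ₀)^α))⁻¹
              * ∫⁻ t in annulus (n-2), (unifOn F).map (fproj L q t)
                  (closedBall (fproj L q t X) (2^j*δ₀)) ∂volume := by
        simp only [hg]
        rw [lintegral_finset_sum _ (fun j _ => (hmeasT X _).const_mul _)]
        exact Finset.sum_congr rfl fun j _ => lintegral_const_mul _ (hmeasT X _)
      rw [e]
      have hb : ∀ j ∈ Finset.range (J+1), (ENNReal.ofReal ((2^j*δ₀)^α))⁻¹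
          * ∫⁻ t in annulus (n-2), (unifOn F).map (fproj L q t)
              (closedBall (fproj L q t X) (2^j*δ₀)) ∂volume
          ≤ ENNReal.ofReal (C*K₂*((J:ℝ)+1)) := by
        intro j _
        have hne : ENNReal.ofReal (((2:ℝ)^j*δ₀)^α) ≠ 0 := by
          simp only [ne_eq, ENNReal.ofReal_eq_zero, not_le]
          positivity
        calc (ENNReal.ofReal ((2^j*δ₀)^α))⁻¹
            * ∫⁻ t in annulus (n-2), (unifOn F).map (fproj L q t)
                (closedBall (fproj L q t X) (2^j*δ₀)) ∂volume
            ≤ (ENNReal.ofReal ((2^j*δ₀)^α))⁻¹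
              * ENNReal.ofReal (C*K₂*((J:ℝ)+1)*(2^j*δ₀)^α) :=
              mul_le_mul_right (hint_term X hXF j) _
          _ = ENNReal.ofReal (C*K₂*((J:ℝ)+1)) := by
              rw [show (C*K₂*((J:ℝ)+1)*(2^j*δ₀)^α)
                  = (C*K₂*((J:ℝ)+1))*((2^j*δ₀)^α) from by ring,
                ENNReal.ofReal_mul hCK₂J,
                mul_comm (ENNReal.ofReal (C*K₂*((J:ℝ)+1))) _, ← mul_assoc,
                ENNReal.inv_mul_cancel hne ENNReal.ofReal_ne_top, one_mul]
      calc ∑ j ∈ Finset.range (J+1), (ENNReal.ofReal ((2^j*δ₀)^α))⁻¹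
            * ∫⁻ t in annulus (n-2), (unifOn F).map (fproj L q t)
                (closedBall (fproj L q t X) (2^j*δ₀)) ∂volume
          ≤ ∑ _j ∈ Finset.range (J+1), ENNReal.ofReal (C*K₂*((J:ℝ)+1)) :=
            Finset.sum_le_sum hb
        _ = ((J+1:ℕ) : ℝ≥0∞) * ENNReal.ofReal (C*K₂*((J:ℝ)+1)) := by
            rw [Finset.sum_const, Finset.card_range, nsmul_eq_mul]
    have h3 : ∫⁻ t in annulus (n-2), G t ∂volume
        ≤ ((J+1:ℕ) : ℝ≥0∞) * ENNReal.ofReal (C*K₂*((J:ℝ)+1)) := by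
      rw [h1]
      calc ∑ X ∈ F, N⁻¹ * ∫⁻ t in annulus (n-2), g t X ∂volume
          ≤ ∑ X ∈ F, N⁻¹ * (((J+1:ℕ) : ℝ≥0∞) * ENNReal.ofReal (C*K₂*((J:ℝ)+1))) :=
            Finset.sum_le_sum (fun X hX => mul_le_mul_right (h2 X hX) _)
        _ = ((J+1:ℕ) : ℝ≥0∞) * ENNReal.ofReal (C*K₂*((J:ℝ)+1)) := by
            rw [← Finset.sum_mul, hsumN, one_mul]
    refine le_trans h3 ?_
    rw [← ENNReal.ofReal_natCast (J+1), ← ENNReal.ofReal_mul (Nat.cast_nonneg (J+1))]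
    apply ENNReal.ofReal_le_ofReal
    push_cast
    have hsq : ((J:ℝ)+1)^2 ≤ (32*ε⁻¹*δ₀^(-(ε/4)))^2 :=
      pow_le_pow_left₀ (by positivity) hJub 2
    have esq : (δ₀^(-(ε/4)))^(2:ℕ) = δ₀^(-(ε/2)) := by
      rw [← Real.rpow_natCast (δ₀^(-(ε/4))) 2, ← Real.rpow_mul hδ₀.le]
      congr 1
      push_cast
      ring
    have e5 : (32*ε⁻¹*δ₀^(-(ε/4)))^2 = 1024*(ε⁻¹)^2*(δ₀^(-(ε/4)))^(2:ℕ) := by ring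
    have hCK₂ : (0:ℝ) ≤ C*K₂ := by nlinarith
    calc ((J:ℝ)+1)*(C*K₂*((J:ℝ)+1)) = C*K₂*((J:ℝ)+1)^2 := by ring
      _ ≤ C*K₂*(1024*(ε⁻¹)^2*δ₀^(-(ε/2))) := by
          rw [← esq, ← e5]
          exact mul_le_mul_of_nonneg_left hsq hCK₂
      _ = C*K₃*(ε⁻¹)^2*δ₀^(-(ε/2)) := by rw [hK₃]; ring
  set T : ℝ≥0∞ := ENNReal.ofReal (C*K₃*δ₀^(-(3*ε/2))) with hT
  have hTne : T ≠ 0 := by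
    rw [hT]; simp only [ne_eq, ENNReal.ofReal_eq_zero, not_le]; positivity
  have hTtop : T ≠ ⊤ := ENNReal.ofReal_ne_top
  set T₂ : ℝ≥0∞ := ENNReal.ofReal (C*K₃*ε^(2:ℝ)*δ₀^(-(5*ε/2))) with hT₂
  have hT₂ne : T₂ ≠ 0 := by
    rw [hT₂]; simp only [ne_eq, ENNReal.ofReal_eq_zero, not_le]; positivity
  have hT₂top : T₂ ≠ ⊤ := ENNReal.ofReal_ne_top
  have he1 : ε^(2:ℝ) * ε^(-(2:ℝ)) = 1 := by
    rw [← Real.rpow_add hε]; norm_num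
  have hsplit : T = T₂ * ENNReal.ofReal (ε^(-(2:ℝ)) * δ₀^ε) := by
    rw [hT, hT₂, ← ENNReal.ofReal_mul (by positivity)]
    congr 1
    have e2 : δ₀^(-(5*ε/2)) * δ₀^ε = δ₀^(-(3*ε/2)) := by
      rw [← Real.rpow_add hδ₀]; congr 1; ring
    have e3 : C*K₃*ε^(2:ℝ)*δ₀^(-(5*ε/2)) * (ε^(-(2:ℝ))*δ₀^ε)
        = C*K₃*(ε^(2:ℝ)*ε^(-(2:ℝ)))*(δ₀^(-(5*ε/2))*δ₀^ε) := by ring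
    rw [e3, he1, e2]
    try ring
  have hEG_T : ENNReal.ofReal (C * K₃ * (ε⁻¹)^2 * δ₀^(-(ε/2)))
      = T * ENNReal.ofReal (ε^(-(2:ℝ)) * δ₀^ε) := by
    rw [hT, ← ENNReal.ofReal_mul (by positivity)]
    congr 1
    have e2 : δ₀^(-(3*ε/2)) * δ₀^ε = δ₀^(-(ε/2)) := by
      rw [← Real.rpow_add hδ₀]; congr 1; ring
    have e4 : (ε⁻¹)^2 = ε^(-(2:ℝ)) := by
      rw [Real.rpow_neg hε.le, show ((2:ℝ)) = ((2:ℕ):ℝ) by norm_num,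
        Real.rpow_natCast, inv_pow]
    have e3 : C*K₃*δ₀^(-(3*ε/2)) * (ε^(-(2:ℝ))*δ₀^ε)
        = C*K₃*(δ₀^(-(3*ε/2))*δ₀^ε)*ε^(-(2:ℝ)) := by ring
    rw [e3, e2, e4]
    try ring
  refine ⟨{t ∈ annulus (n-2) | G t ≤ T}, fun t ht => ht.1, ?_, ?_⟩
  · -- volume of the complement
    have hBsub : annulus (n-2) \ {t ∈ annulus (n-2) | G t ≤ T} ⊆ {t ∈ annulus (n-2) | T < G t} := by
      rintro t ⟨hta, htn⟩
      exact ⟨hta, lt_of_not_ge fun hle => htn ⟨hta, hle⟩⟩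
    have hcheb : T * volume {t ∈ annulus (n-2) | T < G t} ≤ ∫⁻ t in annulus (n-2), G t ∂volume := by
      have h1 : T * volume {t ∈ annulus (n-2) | T < G t}
          = ∫⁻ _t in {t ∈ annulus (n-2) | T < G t}, T ∂volume := by
        rw [setLIntegral_const, mul_comm]
      rw [h1]
      calc ∫⁻ _t in {t ∈ annulus (n-2) | T < G t}, T ∂volume
          ≤ ∫⁻ t in {t ∈ annulus (n-2) | T < G t}, G t ∂volume :=
            setLIntegral_mono hGmeas (fun x hx => (le_of_lt hx.2))
        _ ≤ ∫⁻ t in annulus (n-2), G t ∂volume :=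
            lintegral_mono' (Measure.restrict_mono (fun x hx => hx.1) le_rfl) le_rfl
    have hvolbad : volume {t ∈ annulus (n-2) | T < G t} ≤ ENNReal.ofReal (ε^(-(2:ℝ)) * δ₀^ε) := by
      have h2 : T * volume {t ∈ annulus (n-2) | T < G t}
          ≤ T * ENNReal.ofReal (ε^(-(2:ℝ)) * δ₀^ε) := by
        calc T * volume {t ∈ annulus (n-2) | T < G t} ≤ ∫⁻ t in annulus (n-2), G t ∂volume := hcheb
          _ ≤ ENNReal.ofReal (C * K₃ * (ε⁻¹)^2 * δ₀^(-(ε/2))) := hGint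
          _ = T * ENNReal.ofReal (ε^(-(2:ℝ)) * δ₀^ε) := hEG_T
      exact (ENNReal.mul_le_mul_iff_right hTne hTtop).mp h2
    exact le_trans (measure_mono hBsub) hvolbad
  · intro t ht
    obtain ⟨htann, htG⟩ := ht
    refine ⟨F.filter (fun X => g t X ≤ T₂), Finset.filter_subset _ _, ?_, ?_⟩
    · -- Markov
      have hmeasFt : MeasurableSet (↑(F \ F.filter (fun X => g t X ≤ T₂)) : Set (V (n-2))) :=
        (F \ F.filter (fun X => g t X ≤ T₂)).finite_toSet.isClosed.measurableSet
      set Ft := F.filter (fun X => g t X ≤ T₂) with hFt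
      have hval : unifOn F (↑(F \ Ft)) = N⁻¹ * ((F\Ft).card : ℝ≥0∞) := by
        rw [unifOn_apply _ _ hmeasFt, hN]
        congr 1
        rw [show ∑ x ∈ F, (↑(F\Ft) : Set (V (n-2))).indicator (1 : V (n-2) → ℝ≥0∞) x
            = ∑ x ∈ F, if x ∈ F\Ft then (1:ℝ≥0∞) else 0 from
          Finset.sum_congr rfl fun x _ => by simp [Set.indicator_apply]]
        rw [Finset.sum_ite_mem, Finset.inter_eq_right.mpr (Finset.sdiff_subset),
          Finset.sum_const, nsmul_eq_mul, mul_one]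
      have hGlb : T₂ * (N⁻¹ * ((F\Ft).card : ℝ≥0∞)) ≤ G t := by
        calc T₂ * (N⁻¹ * ((F\Ft).card : ℝ≥0∞)) = ∑ _X ∈ F\Ft, N⁻¹ * T₂ := by
              rw [Finset.sum_const, nsmul_eq_mul]; ring
          _ ≤ ∑ X ∈ F\Ft, N⁻¹ * g t X := by
              refine Finset.sum_le_sum fun X hX => ?_
              have hnot : ¬ (g t X ≤ T₂) := by
                intro h
                exact (Finset.mem_sdiff.mp hX).2
                  (Finset.mem_filter.mpr ⟨(Finset.mem_sdiff.mp hX).1, h⟩)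
              exact mul_le_mul_right (le_of_lt (lt_of_not_ge hnot)) _
          _ ≤ ∑ X ∈ F, N⁻¹ * g t X := Finset.sum_le_sum_of_subset (Finset.sdiff_subset)
          _ = G t := by rw [hG]
      rw [hval]
      refine (ENNReal.mul_le_mul_iff_right hT₂ne hT₂top).mp ?_
      calc T₂ * (N⁻¹ * ((F\Ft).card : ℝ≥0∞)) ≤ G t := hGlb
        _ ≤ T := htG
        _ = T₂ * ENNReal.ofReal (ε^(-(2:ℝ)) * δ₀^ε) := hsplit
    · intro X hX δ hδδ
      have hXF : X ∈ F := (Finset.mem_filter.mp hX).1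
      have hgX : g t X ≤ T₂ := (Finset.mem_filter.mp hX).2
      have hδpos : (0:ℝ) < δ := lt_of_lt_of_le hδ₀ hδδ
      by_cases hδ1 : δ ≤ 1
      · -- dyadic case
        have hJbig : (1:ℝ) ≤ 2^J * δ₀ := by linarith
        have hPex : ∃ j : ℕ, δ ≤ 2^j * δ₀ := ⟨J, by linarith⟩
        set j₀ := Nat.find hPex with hj₀def
        have hj₀ : δ ≤ 2^j₀ * δ₀ := Nat.find_spec hPex
        have hj₀J : j₀ ≤ J := Nat.find_min' hPex (by linarith)
        have hup : 2^j₀ * δ₀ ≤ 2*δ := by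
          rcases Nat.eq_zero_or_pos j₀ with h0 | hpos
          · rw [h0]; simp only [pow_zero, one_mul]; linarith
          · have hnot := Nat.find_min hPex (show j₀ - 1 < j₀ by omega)
            push_neg at hnot
            have hpow2 : (2:ℝ)^j₀ = 2 * 2^(j₀-1) := by
              conv_lhs => rw [show j₀ = (j₀-1)+1 by omega]
              rw [pow_succ]; ring
            rw [hpow2]
            nlinarith
        have hj₀mem : j₀ ∈ Finset.range (J+1) := Finset.mem_range.mpr (by omega)
        have hsingle : (ENNReal.ofReal ((2^j₀*δ₀)^α))⁻¹ * (unifOn F).map (fproj L q t)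
            (closedBall (fproj L q t X) (2^j₀*δ₀)) ≤ g t X := by
          rw [hg]
          exact Finset.single_le_sum (f := fun j => (ENNReal.ofReal ((2^j*δ₀)^α))⁻¹
            * (unifOn F).map (fproj L q t) (closedBall (fproj L q t X) (2^j*δ₀)))
            (fun j _ => zero_le) hj₀mem
        have hane : ENNReal.ofReal ((2^j₀*δ₀)^α) ≠ 0 := by
          simp only [ne_eq, ENNReal.ofReal_eq_zero, not_le]
          positivity
        have hterm : (unifOn F).map (fproj L q t) (closedBall (fproj L q t X) (2^j₀*δ₀))
            ≤ ENNReal.ofReal ((2^j₀*δ₀)^α) * T₂ := by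
          have haux := le_trans hsingle hgX
          calc (unifOn F).map (fproj L q t) (closedBall (fproj L q t X) (2^j₀*δ₀))
              = ENNReal.ofReal ((2^j₀*δ₀)^α) * ((ENNReal.ofReal ((2^j₀*δ₀)^α))⁻¹
                * (unifOn F).map (fproj L q t) (closedBall (fproj L q t X) (2^j₀*δ₀))) := by
                rw [← mul_assoc, ENNReal.mul_inv_cancel hane ENNReal.ofReal_ne_top, one_mul]
            _ ≤ ENNReal.ofReal ((2^j₀*δ₀)^α) * T₂ := mul_le_mul_right haux _
        have hpow : ((2:ℝ)^j₀*δ₀)^α ≤ 2*δ^α := by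
          have h1 : ((2:ℝ)^j₀*δ₀)^α ≤ (2*δ)^α :=
            Real.rpow_le_rpow (by positivity) hup hα.le
          have h2 : ((2:ℝ)*δ)^α = 2^α * δ^α := Real.mul_rpow (by norm_num) hδpos.le
          have h3 : (2:ℝ)^α ≤ 2 := by
            have := Real.rpow_le_rpow_of_exponent_le (x := 2) (by norm_num) hα1
            rwa [Real.rpow_one] at this
          have h4 : (2:ℝ)^α * δ^α ≤ 2 * δ^α :=
            mul_le_mul_of_nonneg_right h3 (by positivity)
          linarith
        have hfinal : 2*δ^α * (C*K₃*ε^(2:ℝ)*δ₀^(-(5*ε/2)))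
            ≤ 2*C*K₃ * ε^(-(2:ℝ)) * δ₀^(-(3*ε)) * δ^α := by
          have e1 : ε^(2:ℝ) ≤ ε^(-(2:ℝ)) :=
            Real.rpow_le_rpow_of_exponent_ge hε hε1.le (by norm_num)
          have e2 : δ₀^(-(5*ε/2)) ≤ δ₀^(-(3*ε)) :=
            Real.rpow_le_rpow_of_exponent_ge hδ₀ hδ₀1 (by linarith)
          have hA : (0:ℝ) ≤ 2*C*K₃ := by nlinarith
          have s1 : (2*C*K₃)*ε^(2:ℝ) ≤ (2*C*K₃)*ε^(-(2:ℝ)) := mul_le_mul_of_nonneg_left e1 hA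
          have s2 : (2*C*K₃)*ε^(2:ℝ)*δ₀^(-(5*ε/2)) ≤ (2*C*K₃)*ε^(-(2:ℝ))*δ₀^(-(5*ε/2)) :=
            mul_le_mul_of_nonneg_right s1 (by positivity)
          have s3 : (2*C*K₃)*ε^(-(2:ℝ))*δ₀^(-(5*ε/2)) ≤ (2*C*K₃)*ε^(-(2:ℝ))*δ₀^(-(3*ε)) :=
            mul_le_mul_of_nonneg_left e2 (mul_nonneg hA (by positivity))
          have s4 : (2*C*K₃)*ε^(2:ℝ)*δ₀^(-(5*ε/2))*δ^α ≤ (2*C*K₃)*ε^(-(2:ℝ))*δ₀^(-(3*ε))*δ^α :=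
            mul_le_mul_of_nonneg_right (le_trans s2 s3) (by positivity)
          calc 2*δ^α * (C*K₃*ε^(2:ℝ)*δ₀^(-(5*ε/2)))
              = (2*C*K₃)*ε^(2:ℝ)*δ₀^(-(5*ε/2))*δ^α := by ring
            _ ≤ (2*C*K₃)*ε^(-(2:ℝ))*δ₀^(-(3*ε))*δ^α := s4
            _ = 2*C*K₃ * ε^(-(2:ℝ)) * δ₀^(-(3*ε)) * δ^α := by ring
        calc (unifOn F).map (fproj L q t) (closedBall (fproj L q t X) δ)
            ≤ (unifOn F).map (fproj L q t) (closedBall (fproj L q t X) (2^j₀*δ₀)) :=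
              measure_mono (closedBall_subset_closedBall hj₀)
          _ ≤ ENNReal.ofReal ((2^j₀*δ₀)^α) * T₂ := hterm
          _ ≤ ENNReal.ofReal (2*δ^α) * T₂ := by
              exact mul_le_mul_left (ENNReal.ofReal_le_ofReal hpow) _
          _ = ENNReal.ofReal (2*δ^α * (C*K₃*ε^(2:ℝ)*δ₀^(-(5*ε/2)))) := by
              rw [hT₂, ← ENNReal.ofReal_mul (by positivity)]
          _ ≤ ENNReal.ofReal (2*C*K₃ * ε^(-(2:ℝ)) * δ₀^(-(3*ε)) * δ^α) :=
              ENNReal.ofReal_le_ofReal hfinal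
      · -- large δ: trivial bound
        push_neg at hδ1
        have h1 : (unifOn F).map (fproj L q t) (closedBall (fproj L q t X) δ) ≤ 1 := by
          calc (unifOn F).map (fproj L q t) (closedBall (fproj L q t X) δ)
              ≤ (unifOn F).map (fproj L q t) Set.univ :=
                measure_mono (Set.subset_univ _)
            _ = 1 := by
                rw [Measure.map_apply (continuous_fproj_X L q t).measurable
                  MeasurableSet.univ, Set.preimage_univ,
                  unifOn_apply F _ MeasurableSet.univ]
                have huniv : ∑ x ∈ F, (Set.univ : Set (V (n-2))).indicator
                    (1 : V (n-2) → ℝ≥0∞) x = (F.card : ℝ≥0∞) := by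
                  simp
                rw [huniv, ENNReal.inv_mul_cancel
                  (by exact_mod_cast Nat.cast_ne_zero.mpr (Finset.card_ne_zero.mpr hFne))
                  (ENNReal.natCast_ne_top _)]
        refine le_trans h1 ?_
        rw [show (1:ℝ≥0∞) = ENNReal.ofReal 1 by simp]
        apply ENNReal.ofReal_le_ofReal
        have f1 : (1:ℝ) ≤ 2*C*K₃ := by nlinarith
        have f2 : (1:ℝ) ≤ ε^(-(2:ℝ)) :=
          Real.one_le_rpow_of_pos_of_le_one_of_nonpos hε hε1.le (by norm_num)
        have f3 : (1:ℝ) ≤ δ₀^(-(3*ε)) :=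
          Real.one_le_rpow_of_pos_of_le_one_of_nonpos hδ₀ hδ₀1 (by nlinarith)
        have f4 : (1:ℝ) ≤ δ^α := by
          have := Real.rpow_le_rpow (zero_le_one) hδ1.le hα.le
          rwa [Real.one_rpow] at this
        have hA : (0:ℝ) ≤ 2*C*K₃ := by nlinarith
        have g2 : 2*C*K₃ ≤ 2*C*K₃*ε^(-(2:ℝ)) := le_mul_of_one_le_right hA f2
        have g3 : 2*C*K₃*ε^(-(2:ℝ)) ≤ 2*C*K₃*ε^(-(2:ℝ))*δ₀^(-(3*ε)) :=
          le_mul_of_one_le_right (mul_nonneg hA (by positivity)) f3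
        have g4 : 2*C*K₃*ε^(-(2:ℝ))*δ₀^(-(3*ε)) ≤ 2*C*K₃*ε^(-(2:ℝ))*δ₀^(-(3*ε))*δ^α :=
          le_mul_of_one_le_right (mul_nonneg (mul_nonneg hA (by positivity)) (by positivity)) f4
        linarith
end
end

section
/- Let L : ℝ^{n-2} → ℝ^{n-2} be a linear isomorphism and q : ℝ^{n-2} → ℝ a positive definite quadratic form, and let f_t(r₁, w, r₂) = (r₁, w · L(t), r₂ q(t)) for t in the annulus B = {t : 1 ≤ ‖t‖ ≤ 2}. Then for every X, X' ∈ ℝ^n with X ≠ X' and every 0 < α < 1, ∫_B (‖f_t(X) − f_t(X')‖ / ‖X − X'‖)^{−α} dt ≤ D/(1−α), where D depends only on L and q. -/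
open MeasureTheory Metric
open scoped ENNReal

noncomputable section

/- ### Auxiliary lemmas -/

lemma aux_abs_coord_le_norm {m : ℕ} (x : EuclideanSpace ℝ (Fin m)) (i : Fin m) :
    |x i| ≤ ‖x‖ := by
  rw [EuclideanSpace.norm_eq, ← Real.sqrt_sq_eq_abs]
  apply Real.sqrt_le_sqrt
  have := Finset.single_le_sum (f := fun j => ‖x j‖^2) (fun j _ => by positivity)
    (Finset.mem_univ i)
  simpa [Real.norm_eq_abs, sq_abs] using this

lemma aux_quadratic_continuous {m : ℕ} (q : QuadraticForm ℝ (E m)) : Continuous q := by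
  have h : ∀ x : E m, q x = (1/2 : ℝ) * (q.polarBilin x x) := by
    intro x
    rw [QuadraticMap.polarBilin_apply_apply, QuadraticMap.polar_self]
    ring
  have hB : Continuous fun x : E m => q.polarBilin x x := by
    set B := q.polarBilin with hBdef
    let B' : E m →ₗ[ℝ] (E m →L[ℝ] ℝ) :=
      (LinearMap.toContinuousLinearMap.toLinearMap).comp B
    let Bc : E m →L[ℝ] (E m →L[ℝ] ℝ) := LinearMap.toContinuousLinearMap B'
    have : ∀ x y : E m, B x y = Bc x y := fun x y => rfl
    simp only [this]
    exact (Bc.continuous₂).comp (continuous_id.prodMk continuous_id)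
  have : ⇑q = fun x => (1/2:ℝ) * (q.polarBilin x x) := funext h
  rw [this]
  exact continuous_const.mul hB

lemma aux_posdef_lower {m : ℕ} (hm : 1 ≤ m) (q : QuadraticForm ℝ (E m))
    (hq : q.PosDef) :
    ∃ c : ℝ, 0 < c ∧ ∀ t : E m, 1 ≤ ‖t‖ → c ≤ q t := by
  have hc : Continuous q := aux_quadratic_continuous q
  haveI : Nontrivial (E m) := by
    apply Module.nontrivial_of_finrank_pos (R := ℝ)
    rw [finrank_euclideanSpace_fin]; omega
  have hcomp : IsCompact (sphere (0:E m) 1) := isCompact_sphere _ _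
  have hne : (sphere (0:E m) 1).Nonempty := by
    rw [NormedSpace.sphere_nonempty]
    norm_num
  obtain ⟨t₀, ht₀, hmin⟩ := hcomp.exists_isMinOn hne (hc.continuousOn)
  have ht₀n : ‖t₀‖ = 1 := by simpa using ht₀
  have ht₀0 : t₀ ≠ 0 := by intro h; rw [h] at ht₀n; simp at ht₀n
  refine ⟨q t₀, hq t₀ ht₀0, fun t ht => ?_⟩
  have htn : t ≠ 0 := by intro h; rw [h] at ht; simp at ht; linarith
  have hnorm : (0:ℝ) < ‖t‖ := by positivity
  have hu : (‖t‖⁻¹ • t) ∈ sphere (0:E m) 1 := by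
    simp [norm_smul, abs_of_pos (inv_pos.2 hnorm), inv_mul_cancel₀ (ne_of_gt hnorm)]
  have h1 : q t₀ ≤ q (‖t‖⁻¹ • t) := hmin hu
  have h2 : q (‖t‖⁻¹ • t) = (‖t‖⁻¹ * ‖t‖⁻¹) * q t := by
    rw [QuadraticMap.map_smul]; simp [smul_eq_mul]
  have h3 : (‖t‖⁻¹ * ‖t‖⁻¹) * q t ≤ q t := by
    have hq0 : 0 ≤ q t := le_of_lt (hq t htn)
    have : ‖t‖⁻¹ * ‖t‖⁻¹ ≤ 1 := by
      have h4 : ‖t‖⁻¹ ≤ 1 := by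
        rw [inv_le_one_iff₀]; right; exact ht
      nlinarith [inv_pos.2 hnorm]
    nlinarith
  linarith [h1, h2 ▸ h1]

lemma aux_slab {m : ℕ} (hm : 1 ≤ m) (L : E m ≃ₗ[ℝ] E m) :
    ∃ D' : ℝ, 0 < D' ∧ ∀ u : E m, ‖u‖ = 1 → ∀ δ : ℝ, 0 < δ →
      volume {t : E m | (1 ≤ ‖t‖ ∧ ‖t‖ ≤ 2) ∧ |(inner ℝ u (L t) : ℝ)| ≤ δ}
        ≤ ENNReal.ofReal (D' * δ) := by
  classical
  set CL : E m →L[ℝ] E m := LinearMap.toContinuousLinearMap L.toLinearMap with hCL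
  set R : ℝ := 2 * ‖CL‖ + 1 with hRdef
  have hR0 : 0 < R := by positivity
  set d : ℝ := |(LinearMap.det L.toLinearMap)⁻¹| with hd
  have hd0 : 0 ≤ d := abs_nonneg _
  refine ⟨d * (2 * (2*R)^(m-1)) + 1, by positivity, ?_⟩
  intro u hu δ hδ
  set i0 : Fin m := ⟨0, hm⟩ with hi0
  set W : Set (E m) := {s : E m | ‖s‖ ≤ R ∧ |(inner ℝ u s : ℝ)| ≤ δ} with hW
  -- step 1 : subset of preimage
  have hsub : {t : E m | (1 ≤ ‖t‖ ∧ ‖t‖ ≤ 2) ∧ |(inner ℝ u (L t) : ℝ)| ≤ δ}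
      ⊆ L.toLinearMap ⁻¹' W := by
    rintro t ⟨⟨_, ht2⟩, ht3⟩
    refine ⟨?_, ht3⟩
    have h1 : ‖L t‖ = ‖CL t‖ := rfl
    have h2 : ‖CL t‖ ≤ ‖CL‖ * ‖t‖ := CL.le_opNorm t
    have h3 : ‖CL‖ * ‖t‖ ≤ ‖CL‖ * 2 := by
      apply mul_le_mul_of_nonneg_left ht2 (norm_nonneg _)
    show ‖L t‖ ≤ R
    rw [h1, hRdef]; nlinarith [norm_nonneg CL]
  -- step 2 : measure of preimage
  have hpre : volume (L.toLinearMap ⁻¹' W) = ENNReal.ofReal d * volume W :=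
    Measure.addHaar_preimage_linearMap volume (LinearEquiv.isUnit_det' L).ne_zero W
  -- step 3 : rotation
  have hrot : volume W = volume {x : E m | ‖x‖ ≤ R ∧ |x i0| ≤ δ} := by
    have hortho : Orthonormal ℝ (({i0} : Set (Fin m)).restrict (fun _ : Fin m => u)) := by
      constructor
      · intro i; exact hu
      · intro i j hij
        exact absurd (Subsingleton.elim i j) hij
    obtain ⟨b, hb⟩ := hortho.exists_orthonormalBasis_extension_of_card_eq
      (by simp [finrank_euclideanSpace_fin])
    have hbu : b i0 = u := hb i0 rfl
    have hmeas : MeasurableSet {x : E m | ‖x‖ ≤ R ∧ |x i0| ≤ δ} := by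
      apply MeasurableSet.inter
      · exact (isClosed_le continuous_norm continuous_const).measurableSet
      · exact (isClosed_le ((EuclideanSpace.proj (𝕜 := ℝ) i0).continuous.abs)
          continuous_const).measurableSet
    have hpre2 : W = b.repr ⁻¹' {x : E m | ‖x‖ ≤ R ∧ |x i0| ≤ δ} := by
      ext s
      simp only [hW, Set.mem_setOf_eq, Set.mem_preimage, b.repr.norm_map]
      rw [b.repr_apply_apply, hbu]
    rw [hpre2]
    exact b.measurePreserving_repr.measure_preimage hmeas.nullMeasurableSet
  -- step 4 : box bound
  have hbox : volume {x : E m | ‖x‖ ≤ R ∧ |x i0| ≤ δ}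
      ≤ ENNReal.ofReal ((2*δ) * (2*R)^(m-1)) := by
    set ψ := (MeasurableEquiv.toLp 2 (Fin m → ℝ)).symm
    have hψ : MeasurePreserving ψ volume volume :=
      EuclideanSpace.volume_preserving_symm_measurableEquiv_toLp _
    set box : Set (Fin m → ℝ) :=
      Set.univ.pi (fun i => if i = i0 then Set.Icc (-δ) δ else Set.Icc (-R) R) with hboxdef
    have hboxm : MeasurableSet box :=
      MeasurableSet.univ_pi (fun i => by split <;> exact measurableSet_Icc)
    have hsub2 : {x : E m | ‖x‖ ≤ R ∧ |x i0| ≤ δ} ⊆ ψ ⁻¹' box := by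
      rintro x ⟨hx1, hx2⟩
      intro i _
      have hcoord : |x i| ≤ ‖x‖ := aux_abs_coord_le_norm x i
      by_cases hi : i = i0
      · subst hi
        simp only [if_pos rfl]
        exact abs_le.1 hx2
      · simp only [if_neg hi]
        exact abs_le.1 (hcoord.trans hx1)
    calc volume {x : E m | ‖x‖ ≤ R ∧ |x i0| ≤ δ} ≤ volume (ψ ⁻¹' box) := measure_mono hsub2
      _ = volume box := hψ.measure_preimage hboxm.nullMeasurableSet
      _ = ∏ i, volume (if i = i0 then Set.Icc (-δ) δ else Set.Icc (-R) R) := volume_pi_pi _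
      _ ≤ ENNReal.ofReal ((2*δ) * (2*R)^(m-1)) := by
          rw [← Finset.mul_prod_erase Finset.univ _ (Finset.mem_univ i0)]
          have h1 : ∀ i ∈ Finset.univ.erase i0,
              volume (if i = i0 then Set.Icc (-δ) δ else Set.Icc (-R) R)
                = ENNReal.ofReal (2*R) := by
            intro i hi
            rw [if_neg (Finset.mem_erase.1 hi).1, Real.volume_Icc]
            ring_nf
          rw [Finset.prod_congr rfl h1, Finset.prod_const, if_pos rfl, Real.volume_Icc]
          have h2 : δ - -δ = 2*δ := by ring
          rw [h2]
          have hcard : (Finset.univ.erase i0).card = m - 1 := by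
            rw [Finset.card_erase_of_mem (Finset.mem_univ i0), Finset.card_univ,
              Fintype.card_fin]
          rw [hcard, ← ENNReal.ofReal_pow (by positivity),
            ← ENNReal.ofReal_mul (by positivity)]
  -- combine
  calc volume {t : E m | (1 ≤ ‖t‖ ∧ ‖t‖ ≤ 2) ∧ |(inner ℝ u (L t) : ℝ)| ≤ δ}
      ≤ volume (L.toLinearMap ⁻¹' W) := measure_mono hsub
    _ = ENNReal.ofReal d * volume W := hpre
    _ ≤ ENNReal.ofReal d * ENNReal.ofReal ((2*δ) * (2*R)^(m-1)) := by
        rw [hrot]; exact mul_le_mul_right hbox _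
    _ = ENNReal.ofReal (d * ((2*δ) * (2*R)^(m-1))) := (ENNReal.ofReal_mul hd0).symm
    _ ≤ ENNReal.ofReal ((d * (2 * (2*R)^(m-1)) + 1) * δ) := by
        apply ENNReal.ofReal_le_ofReal
        have h2R : (0:ℝ) ≤ (2*R)^(m-1) := by positivity
        nlinarith

lemma aux_hyperplane_null {m : ℕ} (L : E m ≃ₗ[ℝ] E m) (u : E m) (hu : ‖u‖ = 1) :
    volume {t : E m | (inner ℝ u (L t) : ℝ) = 0} = 0 := by
  classical
  set f : E m →ₗ[ℝ] ℝ := (innerₛₗ ℝ u).comp L.toLinearMap with hf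
  have hs : {t : E m | (inner ℝ u (L t) : ℝ) = 0} = (LinearMap.ker f : Set (E m)) := by
    ext t; simp [hf, LinearMap.mem_ker, innerₛₗ_apply_apply]
  rw [hs]
  apply Measure.addHaar_submodule
  intro htop
  have h0 : f (L.symm u) = 0 := LinearMap.mem_ker.1 (htop ▸ Submodule.mem_top)
  have h1 : f (L.symm u) = (1:ℝ) := by
    simp only [hf, LinearMap.comp_apply, LinearEquiv.coe_coe, innerₛₗ_apply_apply,
      LinearEquiv.apply_symm_apply]
    rw [real_inner_self_eq_norm_sq, hu]; norm_num
  rw [h0] at h1; norm_num at h1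

lemma aux_rpow_neg_le {x y α : ℝ} (hy : 0 < y) (hyx : y ≤ x) (hα : 0 ≤ α) :
    (ENNReal.ofReal x) ^ (-α) ≤ ENNReal.ofReal (y ^ (-α)) := by
  rw [← ENNReal.ofReal_rpow_of_pos hy, ENNReal.rpow_neg, ENNReal.rpow_neg]
  exact ENNReal.inv_le_inv.2 (ENNReal.rpow_le_rpow (ENNReal.ofReal_le_ofReal hyx) hα)

lemma aux_geom_denom {α : ℝ} (h0 : 0 < α) (h1 : α < 1) :
    (1-α)/3 ≤ 1 - (2:ℝ)^(α-1 : ℝ) := by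
  set x := 1 - α with hx
  have hx0 : 0 < x := by simp [hx]; linarith
  have hx1 : x ≤ 1 := by simp [hx]; linarith
  have h2 : (2:ℝ)^(α-1:ℝ) = ((2:ℝ)^(x:ℝ))⁻¹ := by
    rw [← Real.rpow_neg (by norm_num)]; congr 1; rw [hx]; ring
  have hexp : 1 + x/2 ≤ (2:ℝ)^(x:ℝ) := by
    have hl2 : (0.6931471803 : ℝ) < Real.log 2 := Real.log_two_gt_d9
    have := Real.add_one_le_exp (x * Real.log 2)
    rw [Real.rpow_def_of_pos (by norm_num), mul_comm (Real.log 2) x]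
    nlinarith [mul_le_mul_of_nonneg_left hl2.le hx0.le]
  have hpos : (0:ℝ) < 1 + x/2 := by linarith
  have hinv : ((2:ℝ)^(x:ℝ))⁻¹ ≤ (1 + x/2)⁻¹ := inv_anti₀ hpos hexp
  rw [h2]
  have h3 : (1 + x/2)⁻¹ ≤ 1 - x/3 := by
    rw [inv_le_iff_one_le_mul₀ hpos]
    nlinarith
  linarith [hinv, h3]

lemma aux_r1_sub {m : ℕ} (X X' : V m) : r1 (X - X') = r1 X - r1 X' := by
  simp [r1, WithLp.equiv_apply, WithLp.ofLp_sub]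

lemma aux_wc_sub {m : ℕ} (X X' : V m) : wc (X - X') = wc X - wc X' := by
  simp [wc, WithLp.equiv_apply, WithLp.ofLp_sub]

lemma aux_r2_sub {m : ℕ} (X X' : V m) : r2 (X - X') = r2 X - r2 X' := by
  simp [r2, WithLp.equiv_apply, WithLp.ofLp_sub]

lemma aux_norm_V {m : ℕ} (X : V m) : ‖X‖^2 = (r1 X)^2 + ‖wc X‖^2 + (r2 X)^2 := by
  rw [WithLp.prod_norm_sq_eq_of_L2, WithLp.prod_norm_sq_eq_of_L2]
  simp only [r1, wc, r2, WithLp.equiv_apply, WithLp.ofLp_fst, WithLp.ofLp_snd]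
  simp only [Real.norm_eq_abs, sq_abs]
  ring

lemma aux_norm_fproj_sub {m : ℕ} (L : E m ≃ₗ[ℝ] E m) (q : QuadraticForm ℝ (E m))
    (t : E m) (X X' : V m) :
    ‖fproj L q t X - fproj L q t X'‖^2 =
      (r1 X - r1 X')^2 + (inner ℝ (wc X - wc X') (L t) : ℝ)^2 + ((r2 X - r2 X') * q t)^2 := by
  rw [EuclideanSpace.norm_eq]
  rw [Real.sq_sqrt (by positivity)]
  rw [Fin.sum_univ_three]
  simp only [fproj, WithLp.equiv_symm_apply]
  simp [PiLp.sub_apply, PiLp.toLp_apply, Real.norm_eq_abs, sq_abs, inner_sub_left]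
  ring

set_option maxHeartbeats 1600000 in
theorem stmt10 (n : ℕ) (hn : 3 ≤ n)
    (L : E (n - 2) ≃ₗ[ℝ] E (n - 2))
    (q : QuadraticForm ℝ (E (n - 2))) (hq : q.PosDef) :
    ∃ D : ℝ, 0 < D ∧
      ∀ X X' : V (n - 2), X ≠ X' →
        ∀ α : ℝ, 0 < α → α < 1 →
          (∫⁻ t in {t : E (n - 2) | 1 ≤ ‖t‖ ∧ ‖t‖ ≤ 2},
              (ENNReal.ofReal (‖fproj L q t X - fproj L q t X'‖ / ‖X - X'‖)) ^ (-α) ∂volume)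
            ≤ ENNReal.ofReal (D / (1 - α)) := by
  classical
  have hm : 1 ≤ n - 2 := by omega
  obtain ⟨c, hc0, hc⟩ := aux_posdef_lower hm q hq
  obtain ⟨D', hD'0, hD'⟩ := aux_slab hm L
  set B : Set (E (n - 2)) := {t : E (n - 2) | 1 ≤ ‖t‖ ∧ ‖t‖ ≤ 2} with hBdef
  set VB : ℝ := (volume (closedBall (0:E (n - 2)) 2)).toReal with hVBdef
  have hVB0 : 0 ≤ VB := ENNReal.toReal_nonneg
  have hvolB : volume B ≤ ENNReal.ofReal VB := by
    have hfin : volume (closedBall (0:E (n - 2)) 2) ≠ ⊤ := measure_closedBall_lt_top.ne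
    have hsub : B ⊆ closedBall (0:E (n - 2)) 2 := by
      intro t ht; rw [mem_closedBall_zero_iff]; exact ht.2
    calc volume B ≤ volume (closedBall (0:E (n - 2)) 2) := measure_mono hsub
      _ = ENNReal.ofReal VB := (ENNReal.ofReal_toReal hfin).symm
  set c₀ : ℝ := min 1 c / 2 with hc₀def
  have hc₀0 : 0 < c₀ := by
    rw [hc₀def]; have := lt_min one_pos hc0; positivity
  have hc₀1 : c₀ ≤ 1 := by
    rw [hc₀def]
    have : min 1 c ≤ 1 := min_le_left _ _
    linarith
  set D : ℝ := c₀⁻¹ * VB + 2*VB + 12*D' + 1 with hDdef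
  have hD0 : 0 < D := by
    rw [hDdef]
    have : 0 < c₀⁻¹ := inv_pos.2 hc₀0
    positivity
  refine ⟨D, hD0, ?_⟩
  intro X X' hXX' α hα0 hα1
  have h1α : 0 < 1 - α := by linarith
  have hDdiv : D ≤ D / (1 - α) := by
    rw [le_div_iff₀ h1α]; nlinarith
  set s := ‖X - X'‖ with hsdef
  have hs0 : 0 < s := norm_pos_iff.2 (sub_ne_zero.2 hXX')
  set a := r1 X - r1 X' with hadef
  set v := wc X - wc X' with hvdef
  set b := r2 X - r2 X' with hbdef
  have hsum : s^2 = a^2 + ‖v‖^2 + b^2 := by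
    rw [hsdef, aux_norm_V (X - X'), aux_r1_sub, aux_wc_sub, aux_r2_sub]
  have hDf : ∀ t : E (n - 2), ‖fproj L q t X - fproj L q t X'‖^2
      = a^2 + (inner ℝ v (L t) : ℝ)^2 + (b * q t)^2 := fun t => by
    rw [aux_norm_fproj_sub L q t X X', hadef, hvdef, hbdef]
  -- coordinatewise lower bounds for the norm
  have hla : ∀ t : E (n - 2), |a| ≤ ‖fproj L q t X - fproj L q t X'‖ := fun t => by
    have h := hDf t
    calc |a| = Real.sqrt (a^2) := (Real.sqrt_sq_eq_abs a).symm
      _ ≤ Real.sqrt (‖fproj L q t X - fproj L q t X'‖^2) := Real.sqrt_le_sqrt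
          (by nlinarith [sq_nonneg (inner ℝ v (L t) : ℝ), sq_nonneg (b * q t)])
      _ = ‖fproj L q t X - fproj L q t X'‖ := Real.sqrt_sq (norm_nonneg _)
  have hlv : ∀ t : E (n - 2), |(inner ℝ v (L t) : ℝ)| ≤ ‖fproj L q t X - fproj L q t X'‖ := fun t => by
    have h := hDf t
    calc |(inner ℝ v (L t) : ℝ)| = Real.sqrt ((inner ℝ v (L t) : ℝ)^2) :=
          (Real.sqrt_sq_eq_abs _).symm
      _ ≤ Real.sqrt (‖fproj L q t X - fproj L q t X'‖^2) := Real.sqrt_le_sqrt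
          (by nlinarith [sq_nonneg a, sq_nonneg (b * q t)])
      _ = ‖fproj L q t X - fproj L q t X'‖ := Real.sqrt_sq (norm_nonneg _)
  have hlb : ∀ t : E (n - 2), |b * q t| ≤ ‖fproj L q t X - fproj L q t X'‖ := fun t => by
    have h := hDf t
    calc |b * q t| = Real.sqrt ((b * q t)^2) := (Real.sqrt_sq_eq_abs _).symm
      _ ≤ Real.sqrt (‖fproj L q t X - fproj L q t X'‖^2) := Real.sqrt_le_sqrt
          (by nlinarith [sq_nonneg a, sq_nonneg (inner ℝ v (L t) : ℝ)])
      _ = ‖fproj L q t X - fproj L q t X'‖ := Real.sqrt_sq (norm_nonneg _)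
  -- constant lower-bound case
  have hconst : (∀ t ∈ B, c₀ * s ≤ ‖fproj L q t X - fproj L q t X'‖) →
      (∫⁻ t in B,
          (ENNReal.ofReal (‖fproj L q t X - fproj L q t X'‖ / s)) ^ (-α) ∂volume)
        ≤ ENNReal.ofReal (D / (1 - α)) := by
    intro hb
    have hpow : c₀^(-α) ≤ c₀⁻¹ := by
      rw [Real.rpow_neg hc₀0.le]
      apply inv_anti₀ (by positivity)
      calc c₀ = c₀ ^ (1:ℝ) := (Real.rpow_one c₀).symm
        _ ≤ c₀ ^ α := Real.rpow_le_rpow_of_exponent_ge hc₀0 hc₀1 hα1.le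
    calc (∫⁻ t in B,
            (ENNReal.ofReal (‖fproj L q t X - fproj L q t X'‖ / s)) ^ (-α) ∂volume)
        ≤ ∫⁻ _ in B, ENNReal.ofReal (c₀^(-α)) ∂volume := by
          apply setLIntegral_mono measurable_const
          intro t ht
          apply aux_rpow_neg_le hc₀0 _ hα0.le
          rw [le_div_iff₀ hs0]
          exact hb t ht
      _ = ENNReal.ofReal (c₀^(-α)) * volume B := setLIntegral_const _ _
      _ ≤ ENNReal.ofReal (c₀⁻¹) * ENNReal.ofReal VB :=
          mul_le_mul' (ENNReal.ofReal_le_ofReal hpow) hvolB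
      _ = ENNReal.ofReal (c₀⁻¹ * VB) := (ENNReal.ofReal_mul (by positivity)).symm
      _ ≤ ENNReal.ofReal (D / (1 - α)) := by
          apply ENNReal.ofReal_le_ofReal
          refine le_trans ?_ hDdiv
          rw [hDdef]; nlinarith [inv_pos.2 hc₀0, hD'0, hVB0]
  have hcases : s^2/3 ≤ a^2 ∨ s^2/3 ≤ ‖v‖^2 ∨ s^2/3 ≤ b^2 := by
    by_contra h
    push_neg at h
    obtain ⟨h1, h2, h3⟩ := h
    have hlt : s^2 < s^2 := by
      calc s^2 = a^2 + ‖v‖^2 + b^2 := hsum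
        _ < s^2/3 + s^2/3 + s^2/3 := add_lt_add (add_lt_add h1 h2) h3
        _ = s^2 := by ring
    exact lt_irrefl _ hlt
  have hhalf : ∀ x : ℝ, s^2/3 ≤ x^2 → s/2 ≤ |x| := by
    intro x hx
    calc s/2 = Real.sqrt ((s/2)^2) := (Real.sqrt_sq (by positivity)).symm
      _ ≤ Real.sqrt (x^2) := Real.sqrt_le_sqrt (by nlinarith)
      _ = |x| := Real.sqrt_sq_eq_abs x
  rcases hcases with hca | hcv | hcb
  · -- case |a| large
    apply hconst
    intro t _
    have h1 : s/2 ≤ |a| := hhalf a hca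
    have hc₀half : c₀ ≤ 1/2 := by
      rw [hc₀def]
      have := min_le_left (1:ℝ) c
      linarith
    have h2 : c₀ * s ≤ s/2 := by nlinarith
    linarith [hla t]
  · -- main case : v large
    set ip : E (n - 2) → ℝ := fun t => (inner ℝ (‖v‖⁻¹ • v) (L t) : ℝ) with hip
    have hv0 : v ≠ 0 := by
      intro h
      rw [h] at hcv
      simp only [norm_zero] at hcv
      nlinarith
    have hvn : 0 < ‖v‖ := norm_pos_iff.2 hv0
    have hu : ‖‖v‖⁻¹ • v‖ = 1 := by
      rw [norm_smul, norm_inv, norm_norm, inv_mul_cancel₀ hvn.ne']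
    have hsv : s ≤ 2 * ‖v‖ := by
      have := hhalf ‖v‖ hcv
      rw [abs_of_pos hvn] at this
      linarith
    -- key pointwise lower bound
    have hlow : ∀ t : E (n - 2), |ip t| / 2 ≤ ‖fproj L q t X - fproj L q t X'‖ / s := by
      intro t
      have h1 : |ip t| = ‖v‖⁻¹ * |(inner ℝ v (L t) : ℝ)| := by
        rw [hip]
        simp only [real_inner_smul_left]
        rw [abs_mul, abs_of_pos (inv_pos.2 hvn)]
      rw [div_le_div_iff₀ two_pos hs0, h1]
      have h2 := hlv t
      have h3 : ‖v‖⁻¹ * |(inner ℝ v (L t) : ℝ)| * s ≤ ‖v‖⁻¹ * |(inner ℝ v (L t) : ℝ)| * (2 * ‖v‖) := by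
        apply mul_le_mul_of_nonneg_left hsv (by positivity)
      have h4 : ‖v‖⁻¹ * |(inner ℝ v (L t) : ℝ)| * (2 * ‖v‖)
          = |(inner ℝ v (L t) : ℝ)| * 2 := by
        field_simp
      nlinarith [abs_nonneg (inner ℝ v (L t) : ℝ)]
    set A : ℕ → Set (E (n - 2)) := fun k =>
      {t : E (n - 2) | (1 ≤ ‖t‖ ∧ ‖t‖ ≤ 2) ∧ |ip t| ≤ ((2:ℝ)^k)⁻¹} with hA
    set Nset : Set (E (n - 2)) := {t : E (n - 2) | ip t = 0} with hN
    have hvolA : ∀ k : ℕ, volume (A k) ≤ ENNReal.ofReal (D' * ((2:ℝ)^k)⁻¹) := by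
      intro k
      exact hD' _ hu _ (by positivity)
    -- the covering
    have hcover : B ⊆ (B \ A 0) ∪ ((⋃ k, A k \ A (k+1)) ∪ Nset) := by
      intro t ht
      by_cases h0 : t ∈ A 0
      · by_cases hall : ∀ k : ℕ, |ip t| ≤ ((2:ℝ)^k)⁻¹
        · right; right
          show ip t = 0
          by_contra hz
          have hpos : 0 < |ip t| := abs_pos.2 hz
          obtain ⟨k, hk⟩ := exists_pow_lt_of_lt_one hpos (by norm_num : (1:ℝ)/2 < 1)
          have : ((2:ℝ)^k)⁻¹ < |ip t| := by
            calc ((2:ℝ)^k)⁻¹ = ((1:ℝ)/2)^k := by rw [one_div, inv_pow]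
              _ < |ip t| := hk
          exact absurd (hall k) (not_le.2 this)
        · push_neg at hall
          have hex : ∃ k : ℕ, ¬ (|ip t| ≤ ((2:ℝ)^k)⁻¹) := by
            obtain ⟨k, hk⟩ := hall
            exact ⟨k, not_le.2 hk⟩
          right; left
          set k := Nat.find hex with hk
          have hkspec : ¬ (|ip t| ≤ ((2:ℝ)^k)⁻¹) := Nat.find_spec hex
          have hk0 : k ≠ 0 := by
            intro h
            apply hkspec
            rw [h]
            exact h0.2
          obtain ⟨j, hj⟩ : ∃ j, k = j + 1 := ⟨k - 1, by omega⟩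
          refine Set.mem_iUnion.2 ⟨j, ?_, ?_⟩
          · refine ⟨ht, ?_⟩
            have := Nat.find_min hex (m := j) (by omega)
            push_neg at this
            exact this
          · intro hmem
            exact hkspec (hj ▸ hmem.2)
      · left
        exact ⟨ht, h0⟩
    set r : ℝ := (2:ℝ)^(α - 1 : ℝ) with hrdef
    have hr0 : 0 ≤ r := by rw [hrdef]; positivity
    -- piece 1 : B \ A 0
    have hP1 : (∫⁻ t in B \ A 0,
          (ENNReal.ofReal (‖fproj L q t X - fproj L q t X'‖ / s)) ^ (-α) ∂volume)
        ≤ ENNReal.ofReal (2 * VB) := by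
      have hbound : ∀ t ∈ B \ A 0,
          (ENNReal.ofReal (‖fproj L q t X - fproj L q t X'‖ / s)) ^ (-α)
            ≤ ENNReal.ofReal (((1:ℝ)/2) ^ (-α)) := by
        intro t ⟨htB, htA⟩
        apply aux_rpow_neg_le one_half_pos _ hα0.le
        have h1 : ¬ (|ip t| ≤ ((2:ℝ)^(0:ℕ))⁻¹) := fun h => htA ⟨htB, h⟩
        push_neg at h1
        simp only [pow_zero, inv_one] at h1
        calc (1:ℝ)/2 ≤ |ip t| / 2 := by linarith
          _ ≤ _ := hlow t
      have hhalfpow : ((1:ℝ)/2) ^ (-α) ≤ 2 := by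
        rw [one_div, Real.inv_rpow (by norm_num), Real.rpow_neg (by norm_num), inv_inv]
        calc (2:ℝ)^α ≤ (2:ℝ)^(1:ℝ) :=
              Real.rpow_le_rpow_of_exponent_le one_le_two hα1.le
          _ = 2 := Real.rpow_one 2
      calc (∫⁻ t in B \ A 0,
              (ENNReal.ofReal (‖fproj L q t X - fproj L q t X'‖ / s)) ^ (-α) ∂volume)
          ≤ ∫⁻ _ in B \ A 0, ENNReal.ofReal (((1:ℝ)/2) ^ (-α)) ∂volume :=
            setLIntegral_mono measurable_const hbound
        _ = ENNReal.ofReal (((1:ℝ)/2) ^ (-α)) * volume (B \ A 0) := setLIntegral_const _ _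
        _ ≤ ENNReal.ofReal 2 * ENNReal.ofReal VB := by
            apply mul_le_mul' (ENNReal.ofReal_le_ofReal hhalfpow)
            exact le_trans (measure_mono Set.diff_subset) hvolB
        _ = ENNReal.ofReal (2 * VB) := (ENNReal.ofReal_mul (by norm_num)).symm
    -- piece 2 : dyadic shells
    have hP2 : (∫⁻ t in ⋃ k, A k \ A (k+1),
          (ENNReal.ofReal (‖fproj L q t X - fproj L q t X'‖ / s)) ^ (-α) ∂volume)
        ≤ ENNReal.ofReal (12 * D' / (1 - α)) := by
      have hterm : ∀ k : ℕ, (∫⁻ t in A k \ A (k+1),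
            (ENNReal.ofReal (‖fproj L q t X - fproj L q t X'‖ / s)) ^ (-α) ∂volume)
          ≤ ENNReal.ofReal (4 * D') * (ENNReal.ofReal r)^k := by
        intro k
        set y : ℝ := (((2:ℝ)^(k+2))⁻¹) with hy
        have hy0 : 0 < y := by rw [hy]; positivity
        have hbound : ∀ t ∈ A k \ A (k+1),
            (ENNReal.ofReal (‖fproj L q t X - fproj L q t X'‖ / s)) ^ (-α)
              ≤ ENNReal.ofReal (y ^ (-α)) := by
          intro t ⟨htk, htk1⟩
          apply aux_rpow_neg_le hy0 _ hα0.le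
          have h1 : ¬ (|ip t| ≤ ((2:ℝ)^(k+1))⁻¹) := fun h => htk1 ⟨htk.1, h⟩
          push_neg at h1
          have h2 : y ≤ |ip t| / 2 := by
            rw [hy]
            have : ((2:ℝ)^(k+2)) = ((2:ℝ)^(k+1)) * 2 := by ring
            rw [this, mul_inv]
            have h3 : ((2:ℝ)^(k+1))⁻¹ ≤ |ip t| := h1.le
            nlinarith [inv_pos.2 (pow_pos (by norm_num : (0:ℝ) < 2) (k+1))]
          exact le_trans h2 (hlow t)
        have hreal : y ^ (-α) * (D' * ((2:ℝ)^k)⁻¹) ≤ 4 * D' * r^k := by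
          have e1 : y ^ (-α) = ((2:ℝ)^(k+2)) ^ α := by
            rw [hy, Real.inv_rpow (by positivity), Real.rpow_neg (by positivity), inv_inv]
          have e2 : ((2:ℝ)^(k+2) : ℝ) ^ α = ((2:ℝ)^k) ^ α * (4:ℝ) ^ α := by
            rw [← Real.mul_rpow (by positivity) (by norm_num : (0:ℝ) ≤ 4)]
            norm_num [pow_add]
          have e3 : ((2:ℝ)^k : ℝ) ^ α = ((2:ℝ)^(α:ℝ)) ^ k := by
            rw [← Real.rpow_natCast (2:ℝ) k, ← Real.rpow_mul (by norm_num), mul_comm,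
              Real.rpow_mul (by norm_num), Real.rpow_natCast]
          have e4 : r ^ k = ((2:ℝ)^(α:ℝ))^k * ((2:ℝ)^k)⁻¹ := by
            rw [hrdef, Real.rpow_sub two_pos, Real.rpow_one, div_pow, div_eq_mul_inv]
          have h4α : (4:ℝ) ^ α ≤ 4 := by
            calc (4:ℝ)^α ≤ (4:ℝ)^(1:ℝ) := Real.rpow_le_rpow_of_exponent_le (by norm_num) hα1.le
              _ = 4 := Real.rpow_one 4
          rw [e1, e2, e3, e4]
          have hpos1 : (0:ℝ) ≤ ((2:ℝ)^(α:ℝ))^k * ((2:ℝ)^k)⁻¹ * D' := by positivity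
          nlinarith [hpos1, mul_le_mul_of_nonneg_left h4α hpos1]
        calc (∫⁻ t in A k \ A (k+1),
                (ENNReal.ofReal (‖fproj L q t X - fproj L q t X'‖ / s)) ^ (-α) ∂volume)
            ≤ ∫⁻ _ in A k \ A (k+1), ENNReal.ofReal (y ^ (-α)) ∂volume :=
              setLIntegral_mono measurable_const hbound
          _ = ENNReal.ofReal (y ^ (-α)) * volume (A k \ A (k+1)) := setLIntegral_const _ _
          _ ≤ ENNReal.ofReal (y ^ (-α)) * ENNReal.ofReal (D' * ((2:ℝ)^k)⁻¹) :=
              mul_le_mul' le_rfl (le_trans (measure_mono Set.diff_subset) (hvolA k))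
          _ = ENNReal.ofReal (y ^ (-α) * (D' * ((2:ℝ)^k)⁻¹)) :=
              (ENNReal.ofReal_mul (by positivity)).symm
          _ ≤ ENNReal.ofReal (4 * D' * r^k) := ENNReal.ofReal_le_ofReal hreal
          _ = ENNReal.ofReal (4 * D') * (ENNReal.ofReal r)^k := by
              rw [← ENNReal.ofReal_pow hr0, ← ENNReal.ofReal_mul (by positivity)]
      calc (∫⁻ t in ⋃ k, A k \ A (k+1),
              (ENNReal.ofReal (‖fproj L q t X - fproj L q t X'‖ / s)) ^ (-α) ∂volume)
          ≤ ∑' k : ℕ, (∫⁻ t in A k \ A (k+1),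
              (ENNReal.ofReal (‖fproj L q t X - fproj L q t X'‖ / s)) ^ (-α) ∂volume) :=
            lintegral_iUnion_le _ _
        _ ≤ ∑' k : ℕ, ENNReal.ofReal (4 * D') * (ENNReal.ofReal r)^k :=
            ENNReal.tsum_le_tsum hterm
        _ = ENNReal.ofReal (4 * D') * ∑' k : ℕ, (ENNReal.ofReal r)^k :=
            ENNReal.tsum_mul_left
        _ = ENNReal.ofReal (4 * D') * (1 - ENNReal.ofReal r)⁻¹ := by
            rw [ENNReal.tsum_geometric]
        _ ≤ ENNReal.ofReal (4 * D') * ENNReal.ofReal (3 / (1 - α)) := by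
            apply mul_le_mul' le_rfl
            have h1r : ENNReal.ofReal ((1-α)/3) ≤ 1 - ENNReal.ofReal r := by
              rw [← ENNReal.ofReal_one, ← ENNReal.ofReal_sub _ hr0]
              exact ENNReal.ofReal_le_ofReal (aux_geom_denom hα0 hα1)
            calc (1 - ENNReal.ofReal r)⁻¹ ≤ (ENNReal.ofReal ((1-α)/3))⁻¹ :=
                  ENNReal.inv_le_inv.2 h1r
              _ = ENNReal.ofReal (((1-α)/3)⁻¹) :=
                  (ENNReal.ofReal_inv_of_pos (by positivity)).symm
              _ = ENNReal.ofReal (3 / (1 - α)) := by rw [inv_div]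
        _ = ENNReal.ofReal (12 * D' / (1 - α)) := by
            rw [← ENNReal.ofReal_mul (by positivity)]
            congr 1
            field_simp
            ring
    -- piece 3 : the null set
    have hP3 : (∫⁻ t in Nset,
          (ENNReal.ofReal (‖fproj L q t X - fproj L q t X'‖ / s)) ^ (-α) ∂volume)
        = 0 := by
      apply setLIntegral_measure_zero
      exact aux_hyperplane_null L _ hu
    -- combine
    calc (∫⁻ t in B,
            (ENNReal.ofReal (‖fproj L q t X - fproj L q t X'‖ / s)) ^ (-α) ∂volume)
        ≤ ∫⁻ t in (B \ A 0) ∪ ((⋃ k, A k \ A (k+1)) ∪ Nset),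
            (ENNReal.ofReal (‖fproj L q t X - fproj L q t X'‖ / s)) ^ (-α) ∂volume :=
          lintegral_mono_set hcover
      _ ≤ (∫⁻ t in B \ A 0,
            (ENNReal.ofReal (‖fproj L q t X - fproj L q t X'‖ / s)) ^ (-α) ∂volume)
          + ((∫⁻ t in ⋃ k, A k \ A (k+1),
            (ENNReal.ofReal (‖fproj L q t X - fproj L q t X'‖ / s)) ^ (-α) ∂volume)
          + (∫⁻ t in Nset,
            (ENNReal.ofReal (‖fproj L q t X - fproj L q t X'‖ / s)) ^ (-α) ∂volume)) := by
          refine le_trans (lintegral_union_le _ _ _) ?_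
          exact add_le_add le_rfl (lintegral_union_le _ _ _)
      _ ≤ ENNReal.ofReal (2 * VB) + (ENNReal.ofReal (12 * D' / (1 - α)) + 0) := by
          exact add_le_add hP1 (add_le_add hP2 (le_of_eq hP3))
      _ ≤ ENNReal.ofReal (D / (1 - α)) := by
          rw [add_zero, ← ENNReal.ofReal_add (by positivity) (by positivity)]
          apply ENNReal.ofReal_le_ofReal
          have h1 : 2 * VB + 12 * D' / (1 - α) ≤ (2 * VB + 12 * D') / (1 - α) := by
            rw [add_div]
            apply add_le_add _ le_rfl
            rw [le_div_iff₀ h1α]; nlinarith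
          have h2 : (2 * VB + 12 * D') / (1 - α) ≤ D / (1 - α) := by
            gcongr
            rw [hDdef]
            nlinarith [inv_pos.2 hc₀0, mul_nonneg (inv_pos.2 hc₀0).le hVB0]
          linarith
  · -- case |b| large
    apply hconst
    intro t ht
    have h1 : s/2 ≤ |b| := hhalf b hcb
    have hqt : c ≤ q t := hc t ht.1
    have hqt0 : 0 < q t := lt_of_lt_of_le hc0 hqt
    have h2 : |b * q t| = |b| * q t := by
      rw [abs_mul, abs_of_pos hqt0]
    have h3 : c₀ * s ≤ (s/2) * c := by
      rw [hc₀def]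
      have hmin : min 1 c ≤ c := min_le_right _ _
      nlinarith [min_le_right (1:ℝ) c, lt_min one_pos hc0]
    have h4 : (s/2) * c ≤ |b| * q t := by
      apply mul_le_mul h1 hqt hc0.le (abs_nonneg b)
    linarith [hlb t, h2 ▸ hlb t]
end
end
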